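/- arXiv:1310.6920 — 9 statements merged into one kernel-verified Lean document; each statement's English description precedes it below -/
import Mathlib

section
/- Let H be a real Hilbert space, G a group acting on H by linear isometries, and Σ = H^G the closed subspace of G-fixed points. If f : H → ℝ is a C¹ function invariant under the G-action (f(g x) = f(x) for all g ∈ G, x ∈ H), and x ∈ Σ is a critical point of the restriction of f to Σ, then x is a critical point of f on all of H. -/
/-!
The derivative `Df(x)` at a fixed point is a `G`-invariant functional, so its Riesz
representative `v` is a fixed vector. Criticality on the fixed subspace gives
`‖v‖² = Df(x) v = 0`, hence `Df(x) = 0`.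
-/

open InnerProductSpace

theorem fderiv_comp_eq_of_invariant {𝕜 E F : Type*} [NontriviallyNormedField 𝕜]
    [NormedAddCommGroup E] [NormedSpace 𝕜 E] [NormedAddCommGroup F] [NormedSpace 𝕜 F]
    (A : E ≃L[𝕜] E) {f : E → F} (hf : f ∘ A = f) {x : E} (hx : A x = x) :
    (fderiv 𝕜 f x).comp (A : E →L[𝕜] E) = fderiv 𝕜 f x := by
  conv_rhs => rw [← hf, A.comp_right_fderiv, hx]

section RieszRepresentative

variable {𝕜 H : Type*} [RCLike 𝕜] [NormedAddCommGroup H] [InnerProductSpace 𝕜 H]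
  [CompleteSpace H]

theorem toDual_symm_fixed_of_invariant (A : H ≃ₗᵢ[𝕜] H) {φ : StrongDual 𝕜 H}
    (hφ : ∀ y, φ (A y) = φ y) :
    A ((toDual 𝕜 H).symm φ) = (toDual 𝕜 H).symm φ := by
  refine ext_inner_right 𝕜 fun y => ?_
  calc inner 𝕜 (A ((toDual 𝕜 H).symm φ)) y
      = inner 𝕜 (A ((toDual 𝕜 H).symm φ)) (A (A.symm y)) := by rw [A.apply_symm_apply]
    _ = φ (A.symm y) := by rw [A.inner_map_map, toDual_symm_apply]
    _ = φ y := by rw [← hφ, A.apply_symm_apply]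
    _ = inner 𝕜 ((toDual 𝕜 H).symm φ) y := toDual_symm_apply.symm

theorem eq_zero_of_invariant_of_vanishes_on_fixed {ι : Type*} (A : ι → H ≃ₗᵢ[𝕜] H)
    {φ : StrongDual 𝕜 H} (hφ : ∀ i y, φ (A i y) = φ y)
    (hfix : ∀ v, (∀ i, A i v = v) → φ v = 0) :
    φ = 0 := by
  have hv : (toDual 𝕜 H).symm φ = 0 := by
    rw [← inner_self_eq_zero (𝕜 := 𝕜), toDual_symm_apply]
    exact hfix _ fun i => toDual_symm_fixed_of_invariant (A i) (hφ i)
  simpa using congrArg (toDual 𝕜 H) hv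

end RieszRepresentative

theorem symmetric_criticality_general
    {H : Type*} [NormedAddCommGroup H] [InnerProductSpace ℝ H] [CompleteSpace H]
    {G : Type*} [Group G] (ρ : G →* (H ≃ₗᵢ[ℝ] H))
    (f : H → ℝ)
    (hinv : ∀ (g : G) (y : H), f (ρ g y) = f y)
    (x : H) (hx : ∀ g : G, ρ g x = x)
    (hcrit : ∀ h : H, (∀ g : G, ρ g h = h) → fderiv ℝ f x h = 0) :
    fderiv ℝ f x = 0 := by
  refine eq_zero_of_invariant_of_vanishes_on_fixed (fun g => ρ g) (fun g y => ?_) hcrit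
  exact DFunLike.congr_fun
    (fderiv_comp_eq_of_invariant (ρ g).toContinuousLinearEquiv (funext (hinv g)) (hx g)) y

/-- **Principle of symmetric criticality** (linear isometric Hilbert space setting):
if `f : H → ℝ` is a `C¹` function invariant under a group `G` acting on the real
Hilbert space `H` by linear isometries, and `x` is a `G`-fixed point which is a
critical point of the restriction of `f` to the fixed subspace
`Σ = {y : ∀ g, ρ g y = y}`, then `x` is a critical point of `f` on all of `H`. -/
theorem symmetric_criticality
    {H : Type*} [NormedAddCommGroup H] [InnerProductSpace ℝ H] [CompleteSpace H]
    {G : Type*} [Group G] (ρ : G →* (H ≃ₗᵢ[ℝ] H))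
    (f : H → ℝ) (hf : ContDiff ℝ 1 f)
    (hinv : ∀ (g : G) (y : H), f (ρ g y) = f y)
    (x : H) (hx : ∀ g : G, ρ g x = x)
    (hcrit : ∀ h : H, (∀ g : G, ρ g h = h) → fderiv ℝ f x h = 0) :
    fderiv ℝ f x = 0 :=
  symmetric_criticality_general ρ f hinv x hx hcrit
end

section
/- Let H be a real Hilbert space, G a group acting on H by linear isometries with fixed subspace Σ, and f : H → ℝ a G-invariant C² function. If x ∈ Σ is a critical point of f restricted to Σ, then the second derivative bilinear form D²f(x) satisfies D²f(x)(h, k) = 0 for all h ∈ Σ and k ∈ Σ^⊥; i.e. the orthogonal decomposition H = Σ ⊕ Σ^⊥ is also orthogonal for D²f(x). -/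
/-!
The second derivative of a `G`-invariant function at a `G`-fixed point `x` is a `G`-invariant
bilinear form, so for `h ∈ Σ` the functional `D²f(x)(h, ·)` is `G`-invariant. Its Riesz
representative is then fixed by `G`, i.e. lies in `Σ`, and hence the functional vanishes on `Σᗮ`.
-/

open InnerProductSpace

section Invariance

variable {𝕜 : Type*} [NontriviallyNormedField 𝕜]
  {E : Type*} [NormedAddCommGroup E] [NormedSpace 𝕜 E]
  {F : Type*} [NormedAddCommGroup F] [NormedSpace 𝕜 F]

theorem fderiv_fderiv_apply_map_of_comp_eq {f : E → F} (e : E ≃L[𝕜] E) (hf : f ∘ e = f)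
    {x : E} (hx : e x = x) (u v : E) :
    fderiv 𝕜 (fderiv 𝕜 f) x (e u) (e v) = fderiv 𝕜 (fderiv 𝕜 f) x u v := by
  -- `Φ A = A ∘L e`
  set Φ : (E →L[𝕜] F) ≃L[𝕜] (E →L[𝕜] F) := e.symm.arrowCongr (.refl 𝕜 F)
  have hfderiv : fderiv 𝕜 f = Φ ∘ fderiv 𝕜 f ∘ e := by
    ext y : 1
    conv_lhs => rw [← hf]
    exact e.comp_right_fderiv
  have hsecond : fderiv 𝕜 (fderiv 𝕜 f) x = (Φ : _ →L[𝕜] _).comp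
      ((fderiv 𝕜 (fderiv 𝕜 f) x).comp (e : E →L[𝕜] E)) := by
    conv_lhs => rw [hfderiv]
    rw [Φ.comp_fderiv, e.comp_right_fderiv, hx]
  conv_rhs => rw [hsecond]
  rfl

end Invariance

section Riesz

variable {𝕜 : Type*} [RCLike 𝕜] {H : Type*} [NormedAddCommGroup H] [InnerProductSpace 𝕜 H]
  [CompleteSpace H]

theorem toDual_symm_map_eq_of_map_eq (e : H ≃ₗᵢ[𝕜] H) (L : StrongDual 𝕜 H)
    (hL : ∀ v, L (e v) = L v) : e ((toDual 𝕜 H).symm L) = (toDual 𝕜 H).symm L := by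
  refine ext_inner_right 𝕜 fun v => ?_
  calc ⟪e ((toDual 𝕜 H).symm L), v⟫_𝕜 = ⟪(toDual 𝕜 H).symm L, e.symm v⟫_𝕜 := by
        conv_lhs => rw [← e.apply_symm_apply v]
        exact e.inner_map_map _ _
    _ = L v := by rw [toDual_symm_apply, ← hL, e.apply_symm_apply]
    _ = ⟪(toDual 𝕜 H).symm L, v⟫_𝕜 := toDual_symm_apply.symm

theorem apply_eq_zero_of_mem_orthogonal_of_map_eq {ι : Type*} (ρ : ι → H ≃ₗᵢ[𝕜] H)
    {S : Submodule 𝕜 H} (hS : ∀ y, (∀ i, ρ i y = y) → y ∈ S) (L : StrongDual 𝕜 H)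
    (hL : ∀ i v, L (ρ i v) = L v) {k : H} (hk : k ∈ Sᗮ) : L k = 0 := by
  have hmem : (toDual 𝕜 H).symm L ∈ S :=
    hS _ fun i => toDual_symm_map_eq_of_map_eq (ρ i) L (hL i)
  rw [← toDual_symm_apply]
  exact Submodule.inner_right_of_mem_orthogonal hmem hk

end Riesz

theorem symmetric_criticality_second_variation_general
    {H : Type*} [NormedAddCommGroup H] [InnerProductSpace ℝ H] [CompleteSpace H]
    {G : Type*} [Group G] (ρ : G →* (H ≃ₗᵢ[ℝ] H))
    (Sig : Submodule ℝ H) (hSig : ∀ y : H, y ∈ Sig ↔ ∀ g : G, ρ g y = y)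
    (f : H → ℝ)
    (hinv : ∀ (g : G) (y : H), f (ρ g y) = f y)
    (x : H) (hx : x ∈ Sig) :
    ∀ h ∈ Sig, ∀ k ∈ Sigᗮ, fderiv ℝ (fderiv ℝ f) x h k = 0 := by
  intro h hh k hk
  refine apply_eq_zero_of_mem_orthogonal_of_map_eq ρ (fun y => (hSig y).2) _ (fun g v => ?_) hk
  have hsecond := fderiv_fderiv_apply_map_of_comp_eq (ρ g).toContinuousLinearEquiv
    (funext (hinv g)) ((hSig x).1 hx g) h v
  rwa [LinearIsometryEquiv.coe_toContinuousLinearEquiv, (hSig h).1 hh g] at hsecond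

/-- **Second-order symmetric criticality**: let `G` act on a real Hilbert space `H`
by linear isometries, with fixed-point subspace `Σ`, and let `f : H → ℝ` be a
`G`-invariant `C²` function. If `x ∈ Σ` is a critical point of the restriction of
`f` to `Σ`, then `D²f(x)(h, k) = 0` for all `h ∈ Σ` and `k ∈ Σᗮ`; i.e. the
orthogonal decomposition `H = Σ ⊕ Σᗮ` is orthogonal for the bilinear form `D²f(x)`. -/
theorem symmetric_criticality_second_variation
    {H : Type*} [NormedAddCommGroup H] [InnerProductSpace ℝ H] [CompleteSpace H]
    {G : Type*} [Group G] (ρ : G →* (H ≃ₗᵢ[ℝ] H))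
    (Sig : Submodule ℝ H) (hSig : ∀ y : H, y ∈ Sig ↔ ∀ g : G, ρ g y = y)
    (f : H → ℝ) (hf : ContDiff ℝ 2 f)
    (hinv : ∀ (g : G) (y : H), f (ρ g y) = f y)
    (x : H) (hx : x ∈ Sig)
    (hcrit : ∀ h ∈ Sig, fderiv ℝ f x h = 0) :
    ∀ h ∈ Sig, ∀ k ∈ Sigᗮ, fderiv ℝ (fderiv ℝ f) x h k = 0 :=
  symmetric_criticality_second_variation_general ρ Sig hSig f hinv x hx
end

section
/- For λ > 0, every C² solution q of (1/λ²) q'' = (q² − 4) q on [−1,1] with q(−1) = 2, q(1) = −2, satisfies the first integral identity (1/(2λ²)) q'(x)² = (1/4)(q(x)² − 4)² + q'(−1)² for all x ∈ [−1,1], and consequently q'(x) < 0 for all x ∈ [−1,1]; i.e., q is strictly decreasing. -/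
/-!
Multiplying the equation by `q'` shows that `q'² / 2 - λ² (q² - 4)² / 4` is constant, which is
the first integral. If `q'(-1)` vanished, `q` would solve the same Cauchy problem at `-1` as the
equilibrium `q ≡ 2`, so by uniqueness for the (locally Lipschitz) phase-space system it would be
constant, contradicting `q 1 = -2`. Hence `q'(-1) ≠ 0`, and the first integral gives
`q'² ≥ q'(-1)² > 0` on `[-1, 1]`; since `q'` is negative somewhere by the mean value theorem and
cannot change sign on an interval, it is negative everywhere.
-/

open Set

theorem IsPreconnected.neg_of_ne_zero {X : Type*} [TopologicalSpace X] {s : Set X} {f : X → ℝ}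
    (hs : IsPreconnected s) (hf : ContinuousOn f s) (hf₀ : ∀ x ∈ s, f x ≠ 0) {c : X}
    (hc : c ∈ s) (hfc : f c < 0) {x : X} (hx : x ∈ s) : f x < 0 := by
  by_contra! h
  obtain ⟨y, hy, hfy⟩ := hs.intermediate_value hc hx hf ⟨hfc.le, h⟩
  exact hf₀ y hy hfy

section SecondOrder

variable {q : ℝ → ℝ} {a b : ℝ}

theorem ContDiff.hasDerivAt_and_hasDerivAt_deriv (hq : ContDiff ℝ 2 q) (x : ℝ) :
    HasDerivAt q (deriv q x) x ∧ HasDerivAt (deriv q) (deriv (deriv q) x) x := by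
  have h1 : ContDiff ℝ 1 (deriv q) := hq.iterate_deriv' 1 1
  exact ⟨(hq.differentiable two_ne_zero x).hasDerivAt,
    (h1.differentiable one_ne_zero x).hasDerivAt⟩

theorem energy_eq_of_deriv_deriv_eq {V V' : ℝ → ℝ} (hV : ∀ y, HasDerivAt V (V' y) y)
    (hq : ContDiff ℝ 2 q) (hode : ∀ x ∈ Icc a b, deriv (deriv q) x = V' (q x)) :
    ∀ x ∈ Icc a b, deriv q x ^ 2 / 2 - V (q x) = deriv q a ^ 2 / 2 - V (q a) := by
  have hE : ∀ x, HasDerivAt (fun x ↦ deriv q x ^ 2 / 2 - V (q x))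
      (deriv q x * deriv (deriv q) x - V' (q x) * deriv q x) x := by
    intro x
    obtain ⟨h1, h2⟩ := hq.hasDerivAt_and_hasDerivAt_deriv x
    exact (((h2.pow 2).div_const 2).sub ((hV (q x)).comp x h1)).congr_deriv (by push_cast; ring)
  refine constant_of_has_deriv_right_zero
    (fun x _ ↦ (hE x).continuousAt.continuousWithinAt) fun x hx ↦ ?_
  convert (hE x).hasDerivWithinAt using 1
  rw [hode x (Ico_subset_Icc_self hx)]
  ring

theorem eqOn_of_deriv_deriv_eq_comp {f p : ℝ → ℝ} (hf : LocallyLipschitz f)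
    (hq : ContDiff ℝ 2 q) (hp : ContDiff ℝ 2 p)
    (hqf : ∀ x ∈ Icc a b, deriv (deriv q) x = f (q x))
    (hpf : ∀ x ∈ Icc a b, deriv (deriv p) x = f (p x))
    (ha : q a = p a) (ha' : deriv q a = deriv p a) : EqOn q p (Icc a b) := by
  set v : ℝ × ℝ → ℝ × ℝ := fun z ↦ (z.2, f z.1)
  have hv : LocallyLipschitz v := LipschitzWith.prod_snd.locallyLipschitz.prodMk
    (hf.comp LipschitzWith.prod_fst.locallyLipschitz)
  have phase {r : ℝ → ℝ} (hr : ContDiff ℝ 2 r)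
      (hrf : ∀ x ∈ Icc a b, deriv (deriv r) x = f (r x)) :
      ∀ x ∈ Icc a b, HasDerivAt (fun x ↦ (r x, deriv r x)) (v (r x, deriv r x)) x := by
    intro x hx
    obtain ⟨h1, h2⟩ := hr.hasDerivAt_and_hasDerivAt_deriv x
    simpa only [v, hrf x hx] using h1.prodMk h2
  have hγ {r : ℝ → ℝ} (hr : ContDiff ℝ 2 r) : Continuous fun x ↦ (r x, deriv r x) :=
    hr.continuous.prodMk (hr.continuous_deriv one_le_two)
  set S := (fun x ↦ (q x, deriv q x)) '' Icc a b ∪ (fun x ↦ (p x, deriv p x)) '' Icc a b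
  have hS : IsCompact S :=
    (isCompact_Icc.image (hγ hq)).union (isCompact_Icc.image (hγ hp))
  obtain ⟨K, hK⟩ := hv.locallyLipschitzOn.exists_lipschitzOnWith_of_compact hS
  have hqp := ODE_solution_unique_of_mem_Icc_right (v := fun _ ↦ v) (s := fun _ ↦ S)
    (fun _ _ ↦ hK) (hγ hq).continuousOn
    (fun x hx ↦ (phase hq hqf x (Ico_subset_Icc_self hx)).hasDerivWithinAt)
    (fun x hx ↦ Or.inl (mem_image_of_mem _ (Ico_subset_Icc_self hx)))
    (hγ hp).continuousOn
    (fun x hx ↦ (phase hp hpf x (Ico_subset_Icc_self hx)).hasDerivWithinAt)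
    (fun x hx ↦ Or.inr (mem_image_of_mem _ (Ico_subset_Icc_self hx)))
    (Prod.ext ha ha')
  exact fun x hx ↦ congr_arg Prod.fst (hqp hx)

end SecondOrder

/-- Every `C²` solution of `(1/λ²) q'' = (q² − 4) q` on `[−1,1]` with `q(−1) = 2`,
`q(1) = −2` satisfies the first integral identity
`(1/(2λ²)) q'(x)² = (1/4)(q(x)² − 4)² + (1/(2λ²)) q'(−1)²` (the constant of
integration being the value of the left-hand side at `x = −1`, where `q² − 4 = 0`),
and consequently `q' < 0` on `[−1,1]`: `q` is strictly decreasing. -/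
theorem bvp_first_integral_and_decreasing (lam : ℝ) (hlam : 0 < lam)
    (q : ℝ → ℝ) (hq : ContDiff ℝ 2 q)
    (hode : ∀ x ∈ Set.Icc (-1 : ℝ) 1,
      (1 / lam ^ 2) * deriv (deriv q) x = ((q x) ^ 2 - 4) * q x)
    (hbc1 : q (-1) = 2) (hbc2 : q 1 = -2) :
    (∀ x ∈ Set.Icc (-1 : ℝ) 1,
      (1 / (2 * lam ^ 2)) * (deriv q x) ^ 2 =
        (1 / 4) * ((q x) ^ 2 - 4) ^ 2 + (1 / (2 * lam ^ 2)) * (deriv q (-1)) ^ 2) ∧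
    (∀ x ∈ Set.Icc (-1 : ℝ) 1, deriv q x < 0) := by
  have hlam₀ : lam ^ 2 ≠ 0 := by positivity
  set f : ℝ → ℝ := fun y ↦ lam ^ 2 * ((y ^ 2 - 4) * y)
  have hqf : ∀ x ∈ Icc (-1 : ℝ) 1, deriv (deriv q) x = f (q x) := fun x hx ↦ by
    simp only [f]; rw [← hode x hx]; field_simp
  have hV : ∀ y, HasDerivAt (fun y ↦ lam ^ 2 / 4 * (y ^ 2 - 4) ^ 2) (f y) y := fun y ↦
    (((hasDerivAt_pow 2 y).sub_const 4).pow 2 |>.const_mul (lam ^ 2 / 4)).congr_deriv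
      (by simp only [f]; ring)
  have hfirst : ∀ x ∈ Icc (-1 : ℝ) 1, (1 / (2 * lam ^ 2)) * (deriv q x) ^ 2 =
      (1 / 4) * ((q x) ^ 2 - 4) ^ 2 + (1 / (2 * lam ^ 2)) * (deriv q (-1)) ^ 2 := by
    intro x hx
    have h := energy_eq_of_deriv_deriv_eq hV hq hqf x hx
    rw [hbc1] at h
    field_simp
    linear_combination 8 * h
  -- otherwise `q` and the equilibrium `2` solve the same Cauchy problem at `-1`
  have hq'₀ : deriv q (-1) ≠ 0 := fun h₀ ↦ by
    have hf : ContDiff ℝ 1 f := by fun_prop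
    have h := eqOn_of_deriv_deriv_eq_comp hf.locallyLipschitz hq contDiff_const hqf
      (fun _ _ ↦ by norm_num [f]) hbc1 (by simpa using h₀) (right_mem_Icc.2 (by norm_num))
    norm_num [hbc2] at h
  have hne : ∀ x ∈ Icc (-1 : ℝ) 1, deriv q x ≠ 0 := fun x hx h₀ ↦ by
    have h := hfirst x hx
    rw [h₀] at h
    have : 0 < (1 / (2 * lam ^ 2)) * (deriv q (-1)) ^ 2 := by positivity
    nlinarith [sq_nonneg (q x ^ 2 - 4)]
  obtain ⟨c, hc, hslope⟩ := exists_deriv_eq_slope q (by norm_num : (-1 : ℝ) < 1)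
    hq.continuous.continuousOn (hq.differentiable two_ne_zero).differentiableOn
  have hc' : deriv q c < 0 := by rw [hslope, hbc1, hbc2]; norm_num
  exact ⟨hfirst, fun x hx ↦ isPreconnected_Icc.neg_of_ne_zero
    (hq.continuous_deriv one_le_two).continuousOn hne (Ioo_subset_Icc_self hc) hc' hx⟩
end

section
/- For each λ > 0, the boundary value problem (1/λ²) q'' = (q² − 4) q on (−1, 1), q(−1) = 2, q(1) = −2, has at most one C² solution. -/
/-!
The first integral `(q')² = (λ²/2)(q² - 4)² + q'(-1)²` together with `q(-1) = 2 > -2 = q(1)`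
forces `q' = -√((λ²/2)(q² - 4)² + q'(-1)²)` on `[-1, 1]`: the slope `q'(-1)` cannot vanish,
since the constant `2` solves the same Cauchy problem. If two solutions had `q'(-1) < r'(-1)`, then
`q' < r'` wherever `q = r`, so `r - q` could only cross zero upwards; but it leaves `0` upwards
at `-1` and returns to `0` at `1`. Hence `q'(-1) = r'(-1)`, and uniqueness for the Cauchy problem
gives `q = r`.
-/

open Set Filter Topology

theorem ODE_solution_unique_of_contDiff {E : Type*} [NormedAddCommGroup E] [NormedSpace ℝ E]
    {v : E → E} (hv : ContDiff ℝ 1 v) {f g : ℝ → E} {a b : ℝ}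
    (hf : ∀ t ∈ Icc a b, HasDerivAt f (v (f t)) t)
    (hg : ∀ t ∈ Icc a b, HasDerivAt g (v (g t)) t)
    (ha : f a = g a) : EqOn f g (Icc a b) := by
  have hfc : ContinuousOn f (Icc a b) := HasDerivAt.continuousOn hf
  have hgc : ContinuousOn g (Icc a b) := HasDerivAt.continuousOn hg
  obtain ⟨K, hK⟩ := hv.locallyLipschitz.locallyLipschitzOn.exists_lipschitzOnWith_of_compact
    ((isCompact_Icc.image_of_continuousOn hfc).union (isCompact_Icc.image_of_continuousOn hgc))
  exact ODE_solution_unique_of_mem_Icc_right (v := fun _ ↦ v) (fun _ _ ↦ hK) hfc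
    (fun t ht ↦ (hf t (Ico_subset_Icc_self ht)).hasDerivWithinAt)
    (fun t ht ↦ Or.inl (mem_image_of_mem f (Ico_subset_Icc_self ht))) hgc
    (fun t ht ↦ (hg t (Ico_subset_Icc_self ht)).hasDerivWithinAt)
    (fun t ht ↦ Or.inr (mem_image_of_mem g (Ico_subset_Icc_self ht))) ha

section SecondOrder

variable {F : ℝ → ℝ} {q r : ℝ → ℝ} {a b : ℝ}

theorem ContDiff.hasDerivAt_deriv (hq : ContDiff ℝ 2 q) (x : ℝ) :
    HasDerivAt (deriv q) (deriv (deriv q) x) x :=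
  ((hq.deriv' (n := 1)).differentiable one_ne_zero x).hasDerivAt

theorem eqOn_of_deriv_deriv_eq_comp_s11 (hF : ContDiff ℝ 1 F) (hq : ContDiff ℝ 2 q)
    (hr : ContDiff ℝ 2 r) (hqF : ∀ x ∈ Icc a b, deriv (deriv q) x = F (q x))
    (hrF : ∀ x ∈ Icc a b, deriv (deriv r) x = F (r x))
    (h₀ : q a = r a) (h₁ : deriv q a = deriv r a) : EqOn q r (Icc a b) := by
  have phase {p : ℝ → ℝ} (hp : ContDiff ℝ 2 p)
      (hpF : ∀ x ∈ Icc a b, deriv (deriv p) x = F (p x)) (t : ℝ) (ht : t ∈ Icc a b) :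
      HasDerivAt (fun t ↦ (p t, deriv p t)) (deriv p t, F (p t)) t := by
    rw [← hpF t ht]
    exact (hp.differentiable two_ne_zero t).hasDerivAt.prodMk (hp.hasDerivAt_deriv t)
  have hv : ContDiff ℝ 1 fun z : ℝ × ℝ ↦ (z.2, F z.1) :=
    contDiff_snd.prodMk (hF.comp contDiff_fst)
  exact fun x hx ↦ congrArg Prod.fst
    (ODE_solution_unique_of_contDiff hv (phase hq hqF) (phase hr hrF) (by rw [h₀, h₁]) hx)

theorem deriv_sq_sub_two_mul_comp_eq {G : ℝ → ℝ} (hG : ∀ y, HasDerivAt G (F y) y)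
    (hq : ContDiff ℝ 2 q) (hqF : ∀ x ∈ Icc a b, deriv (deriv q) x = F (q x)) :
    ∀ x ∈ Icc a b, deriv q x ^ 2 - 2 * G (q x) = deriv q a ^ 2 - 2 * G (q a) := by
  have hderiv : ∀ x ∈ Icc a b, HasDerivAt (fun x ↦ deriv q x ^ 2 - 2 * G (q x)) 0 x := by
    intro x hx
    refine (((hq.hasDerivAt_deriv x).pow 2).sub
      (((hG (q x)).comp x (hq.differentiable two_ne_zero x).hasDerivAt).const_mul 2)).congr_deriv ?_
    rw [hqF x hx]
    ring
  exact constant_of_has_deriv_right_zero (HasDerivAt.continuousOn hderiv)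
    fun x hx ↦ (hderiv x (Ico_subset_Icc_self hx)).hasDerivWithinAt

end SecondOrder

theorem exists_eq_zero_deriv_nonpos {d : ℝ → ℝ} {a b : ℝ} (hab : a < b)
    (hd : Differentiable ℝ d) (ha : d a = 0) (hb : d b = 0) :
    ∃ x ∈ Icc a b, d x = 0 ∧ deriv d x ≤ 0 := by
  by_contra! hpos
  have hnonneg : ∀ x ∈ Icc a b, 0 ≤ d x :=
    image_le_of_deriv_right_lt_deriv_boundary' (f := 0) (f' := 0) continuousOn_const
      (fun x _ ↦ hasDerivWithinAt_const x _ 0) ha.ge hd.continuous.continuousOn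
      (fun x _ ↦ (hd x).hasDerivAt.hasDerivWithinAt)
      (fun x hx h ↦ hpos x (Ico_subset_Icc_self hx) h.symm)
  have hslope : ∀ᶠ y in 𝓝[<] b, 0 < slope d b y :=
    ((hasDerivAt_iff_tendsto_slope.mp (hd b).hasDerivAt).mono_left (nhdsLT_le_nhdsNE b)).eventually
      (eventually_gt_nhds (hpos b (right_mem_Icc.2 hab.le) hb))
  obtain ⟨y, hy, hya⟩ := (hslope.and (Ioo_mem_nhdsLT hab)).exists
  exact (neg_of_slope_pos hya.2 hy hb).not_ge (hnonneg y (Ioo_subset_Icc_self hya))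

structure IsBVPSolution (k : ℝ) (q : ℝ → ℝ) : Prop where
  contDiff : ContDiff ℝ 2 q
  ode : ∀ x ∈ Icc (-1 : ℝ) 1, deriv (deriv q) x = k * ((q x ^ 2 - 4) * q x)
  left : q (-1) = 2
  right : q 1 = -2

namespace IsBVPSolution

variable {k : ℝ} {q r : ℝ → ℝ}

theorem eqOn_of_deriv_eq (hq : IsBVPSolution k q) (hr : IsBVPSolution k r)
    (h : deriv q (-1) = deriv r (-1)) : EqOn q r (Icc (-1) 1) :=
  eqOn_of_deriv_deriv_eq_comp_s11 (F := fun y ↦ k * ((y ^ 2 - 4) * y)) (by fun_prop)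
    hq.contDiff hr.contDiff hq.ode hr.ode (hq.left.trans hr.left.symm) h

theorem deriv_sq_eq (hq : IsBVPSolution k q) :
    ∀ x ∈ Icc (-1 : ℝ) 1, deriv q x ^ 2 = k / 2 * (q x ^ 2 - 4) ^ 2 + deriv q (-1) ^ 2 := by
  intro x hx
  have hG (y : ℝ) : HasDerivAt (fun y ↦ k / 4 * (y ^ 2 - 4) ^ 2) (k * ((y ^ 2 - 4) * y)) y := by
    refine (((hasDerivAt_pow 2 y).sub_const 4).pow 2 |>.const_mul (k / 4)).congr_deriv ?_
    ring
  have := deriv_sq_sub_two_mul_comp_eq hG hq.contDiff hq.ode x hx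
  rw [hq.left] at this
  linarith

theorem deriv_left_ne_zero (hq : IsBVPSolution k q) : deriv q (-1) ≠ 0 := by
  intro h
  have hconst : EqOn q (fun _ ↦ 2) (Icc (-1) 1) :=
    eqOn_of_deriv_deriv_eq_comp_s11 (F := fun y ↦ k * ((y ^ 2 - 4) * y)) (by fun_prop)
      hq.contDiff contDiff_const hq.ode (fun _ _ ↦ by norm_num) hq.left (by simpa using h)
  have := hconst (right_mem_Icc.2 (by norm_num))
  norm_num [hq.right] at this

theorem deriv_neg (hq : IsBVPSolution k q) (hk : 0 ≤ k) :
    ∀ x ∈ Icc (-1 : ℝ) 1, deriv q x < 0 := by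
  have hne : ∀ x ∈ Icc (-1 : ℝ) 1, deriv q x ≠ 0 := fun x hx h ↦ by
    have := hq.deriv_sq_eq x hx
    rw [h] at this
    nlinarith [pow_pos (abs_pos.2 hq.deriv_left_ne_zero) 2, sq_abs (deriv q (-1)),
      mul_nonneg hk (sq_nonneg (q x ^ 2 - 4))]
  have hd : ∀ x ∈ Icc (-1 : ℝ) 1, HasDerivWithinAt q (deriv q x) (Icc (-1) 1) x :=
    fun x _ ↦ (hq.contDiff.differentiable two_ne_zero x).hasDerivAt.hasDerivWithinAt
  refine (hasDerivWithinAt_forall_lt_or_forall_gt_of_forall_ne (convex_Icc _ _) hd hne)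
    |>.resolve_right fun hpos ↦ ?_
  have := strictMonoOn_of_deriv_pos (convex_Icc (-1 : ℝ) 1) hq.contDiff.continuous.continuousOn
    (fun x hx ↦ hpos x (interior_subset hx)) (left_mem_Icc.2 (by norm_num))
    (right_mem_Icc.2 (by norm_num)) (by norm_num)
  norm_num [hq.left, hq.right] at this

theorem deriv_eq_neg_sqrt (hq : IsBVPSolution k q) (hk : 0 ≤ k) :
    ∀ x ∈ Icc (-1 : ℝ) 1, deriv q x = -√(k / 2 * (q x ^ 2 - 4) ^ 2 + deriv q (-1) ^ 2) :=
  fun x hx ↦ by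
    rw [← hq.deriv_sq_eq x hx, Real.sqrt_sq_eq_abs, abs_of_neg (hq.deriv_neg hk x hx), neg_neg]

theorem deriv_lt_of_eq (hq : IsBVPSolution k q) (hr : IsBVPSolution k r) (hk : 0 ≤ k)
    (h : deriv q (-1) < deriv r (-1)) :
    ∀ x ∈ Icc (-1 : ℝ) 1, q x = r x → deriv q x < deriv r x := by
  intro x hx hqr
  have hsq : deriv r (-1) ^ 2 < deriv q (-1) ^ 2 := by
    nlinarith [hr.deriv_neg hk (-1) (left_mem_Icc.2 (by norm_num))]
  rw [hq.deriv_eq_neg_sqrt hk x hx, hr.deriv_eq_neg_sqrt hk x hx, hqr, neg_lt_neg_iff]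
  exact Real.sqrt_lt_sqrt (add_nonneg (mul_nonneg (by linarith) (sq_nonneg _)) (sq_nonneg _))
    (by linarith)

theorem not_deriv_lt (hq : IsBVPSolution k q) (hr : IsBVPSolution k r) (hk : 0 ≤ k) :
    ¬ deriv q (-1) < deriv r (-1) := fun h ↦ by
  have hq' := hq.contDiff.differentiable two_ne_zero
  have hr' := hr.contDiff.differentiable two_ne_zero
  obtain ⟨x, hx, hzero, hnonpos⟩ := exists_eq_zero_deriv_nonpos (d := r - q) (a := -1) (b := 1)
    (by norm_num) (hr'.sub hq') (by simp [hq.left, hr.left]) (by simp [hq.right, hr.right])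
  rw [deriv_sub (hr' x) (hq' x)] at hnonpos
  have := hq.deriv_lt_of_eq hr hk h x hx (sub_eq_zero.1 hzero).symm
  linarith

end IsBVPSolution

/-- For each `λ > 0`, the boundary value problem `(1/λ²) q'' = (q² − 4) q` on
`(−1,1)`, `q(−1) = 2`, `q(1) = −2`, has at most one `C²` solution. -/
theorem bvp_uniqueness (lam : ℝ) (hlam : 0 < lam)
    (q r : ℝ → ℝ) (hq : ContDiff ℝ 2 q) (hr : ContDiff ℝ 2 r)
    (hqode : ∀ x ∈ Set.Icc (-1 : ℝ) 1,
      (1 / lam ^ 2) * deriv (deriv q) x = ((q x) ^ 2 - 4) * q x)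
    (hrode : ∀ x ∈ Set.Icc (-1 : ℝ) 1,
      (1 / lam ^ 2) * deriv (deriv r) x = ((r x) ^ 2 - 4) * r x)
    (hqbc1 : q (-1) = 2) (hqbc2 : q 1 = -2)
    (hrbc1 : r (-1) = 2) (hrbc2 : r 1 = -2) :
    Set.EqOn q r (Set.Icc (-1 : ℝ) 1) := by
  have solves {p : ℝ → ℝ} (hp : ContDiff ℝ 2 p)
      (hode : ∀ x ∈ Icc (-1 : ℝ) 1, 1 / lam ^ 2 * deriv (deriv p) x = (p x ^ 2 - 4) * p x)
      (h₁ : p (-1) = 2) (h₂ : p 1 = -2) : IsBVPSolution (lam ^ 2) p :=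
    ⟨hp, fun x hx ↦ by rw [← hode x hx]; field_simp [hlam.ne'], h₁, h₂⟩
  have hQ := solves hq hqode hqbc1 hqbc2
  have hR := solves hr hrode hrbc1 hrbc2
  rcases lt_trichotomy (deriv q (-1)) (deriv r (-1)) with h | h | h
  · exact absurd h (hQ.not_deriv_lt hR (sq_nonneg lam))
  · exact hQ.eqOn_of_deriv_eq hR h
  · exact absurd h (hR.not_deriv_lt hQ (sq_nonneg lam))
end

section
/- For each λ > 0, the unique solution q of the boundary value problem (1/λ²) q'' = (q² − 4) q on (−1,1), q(−1) = 2, q(1) = −2, is odd: q(−x) = −q(x) for all x ∈ [−1,1]. -/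
/-!
The equation `q'' = F q` with `F y = λ² (y² - 4) y` is autonomous and `F` is odd, so the
reflection `x ↦ -q (-x)` is again a solution, with the boundary values swapped. The energy
`q'² / 2 - G q`, with potential `G y = λ² (y² - 4)² / 4 ≥ 0` vanishing at `±2`, is conserved;
this gives `q'(-1)² = q'(1)²`. Moreover `q'(1) ≠ 0`, since otherwise `q ≡ -2` by uniqueness,
so the energy is positive and `q'` never vanishes on `[-1, 1]`; by the intermediate value
theorem `q'(-1) = q'(1)`. Thus the reflected solution has the same Cauchy data as `q` at `1`,
and uniqueness for `C¹` vector fields gives `-q (-x) = q x`.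
-/

open Set Pointwise

theorem ODE_solution_unique_of_contDiff_of_mem_Icc_left {E : Type*} [NormedAddCommGroup E]
    [NormedSpace ℝ E] [ProperSpace E] {V : E → E} (hV : ContDiff ℝ 1 V) {f g : ℝ → E} {a b : ℝ}
    (hf : ∀ t ∈ Icc a b, HasDerivAt f (V (f t)) t) (hg : ∀ t ∈ Icc a b, HasDerivAt g (V (g t)) t)
    (hb : f b = g b) : EqOn f g (Icc a b) := by
  have hfc : ContinuousOn f (Icc a b) := HasDerivAt.continuousOn hf
  have hgc : ContinuousOn g (Icc a b) := HasDerivAt.continuousOn hg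
  obtain ⟨R, hR⟩ := ((isCompact_Icc.image_of_continuousOn hfc).union
    (isCompact_Icc.image_of_continuousOn hgc)).isBounded.subset_closedBall 0
  obtain ⟨K, hK⟩ := hV.contDiffOn.exists_lipschitzOnWith one_ne_zero
    (convex_closedBall 0 R) (isCompact_closedBall 0 R)
  exact ODE_solution_unique_of_mem_Icc_left (fun _ _ => hK) hfc
    (fun t ht => (hf t (Ioc_subset_Icc_self ht)).hasDerivWithinAt)
    (fun t ht => hR (.inl ⟨t, Ioc_subset_Icc_self ht, rfl⟩)) hgc
    (fun t ht => (hg t (Ioc_subset_Icc_self ht)).hasDerivWithinAt)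
    (fun t ht => hR (.inr ⟨t, Ioc_subset_Icc_self ht, rfl⟩)) hb

theorem ContinuousOn.eq_of_sq_eq_of_ne_zero {f : ℝ → ℝ} {a b : ℝ} (hf : ContinuousOn f (Icc a b))
    (hab : a ≤ b) (hf0 : ∀ x ∈ Icc a b, f x ≠ 0) (hsq : f a ^ 2 = f b ^ 2) : f a = f b := by
  refine (sq_eq_sq_iff_eq_or_eq_neg.1 hsq).resolve_right fun hneg => ?_
  have h0 : (0 : ℝ) ∈ uIcc (f a) (f b) := by
    rw [hneg, mem_uIcc]
    rcases le_total 0 (f b) with h | h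
    · exact .inl ⟨by linarith, h⟩
    · exact .inr ⟨h, by linarith⟩
  rw [← uIcc_of_le hab] at hf hf0
  obtain ⟨x, hx, hfx⟩ := intermediate_value_uIcc hf h0
  exact hf0 x hx hfx

theorem hasDerivAt_doubleWell (c a y : ℝ) :
    HasDerivAt (fun y => c * (y ^ 2 - a) ^ 2 / 4) (c * ((y ^ 2 - a) * y)) y := by
  refine (((((hasDerivAt_id y).pow 2).sub_const a).pow 2).const_mul c |>.div_const 4).congr_deriv ?_
  simp only [id, Pi.pow_apply]
  push_cast
  ring

/-- `u'' = F u` on `s`, with the velocity `u'` carried along so that no `deriv` is involved. -/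
def IsNewtonSolOn (F : ℝ → ℝ) (s : Set ℝ) (u u' : ℝ → ℝ) : Prop :=
  ∀ x ∈ s, HasDerivAt u (u' x) x ∧ HasDerivAt u' (F (u x)) x

theorem isNewtonSolOn_const {F : ℝ → ℝ} {s : Set ℝ} {c : ℝ} (hc : F c = 0) :
    IsNewtonSolOn F s (fun _ => c) (fun _ => 0) :=
  fun x _ => ⟨hasDerivAt_const x c, by rw [hc]; exact hasDerivAt_const x 0⟩

namespace IsNewtonSolOn

variable {F : ℝ → ℝ} {s : Set ℝ} {u u' : ℝ → ℝ} {a b : ℝ}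

theorem eqOn_of_eq_right {v v' : ℝ → ℝ} (hF : ContDiff ℝ 1 F) (hu : IsNewtonSolOn F (Icc a b) u u')
    (hv : IsNewtonSolOn F (Icc a b) v v') (hb : u b = v b) (hb' : u' b = v' b) :
    EqOn u v (Icc a b) := by
  have hV : ContDiff ℝ 1 fun y : ℝ × ℝ => (y.2, F y.1) := contDiff_snd.prodMk (hF.comp contDiff_fst)
  have hphase := ODE_solution_unique_of_contDiff_of_mem_Icc_left hV
    (f := fun x => (u x, u' x)) (g := fun x => (v x, v' x))
    (fun t ht => (hu t ht).1.prodMk (hu t ht).2) (fun t ht => (hv t ht).1.prodMk (hv t ht).2)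
    (Prod.ext hb hb')
  exact fun x hx => congrArg Prod.fst (hphase hx)

theorem energy_eq {G : ℝ → ℝ} (hG : ∀ y, HasDerivAt G (F y) y) (hu : IsNewtonSolOn F (Icc a b) u u')
    {x y : ℝ} (hx : x ∈ Icc a b) (hy : y ∈ Icc a b) :
    u' x ^ 2 / 2 - G (u x) = u' y ^ 2 / 2 - G (u y) := by
  have hE : ∀ t ∈ Icc a b, HasDerivAt (fun t => u' t ^ 2 / 2 - G (u t)) 0 t := fun t ht =>
    ((((hu t ht).2.pow 2).div_const 2).sub ((hG (u t)).comp t (hu t ht).1)).congr_deriv (by ring)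
  have hconst := constant_of_has_deriv_right_zero (HasDerivAt.continuousOn hE)
    fun t ht => (hE t (Ico_subset_Icc_self ht)).hasDerivWithinAt
  exact (hconst x hx).trans (hconst y hy).symm

theorem comp_neg (hF : ∀ y, F (-y) = -F y) (hu : IsNewtonSolOn F s u u') :
    IsNewtonSolOn F (-s) (fun x => -u (-x)) (fun x => u' (-x)) := fun x hx =>
  let ⟨hu₁, hu₂⟩ := hu (-x) (mem_neg.1 hx)
  ⟨(hu₁.comp x (hasDerivAt_neg x)).neg.congr_deriv (by ring),
    (hu₂.comp x (hasDerivAt_neg x)).congr_deriv (by simp [hF])⟩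

theorem deriv_right_ne_zero {c : ℝ} (hF : ContDiff ℝ 1 F) (hc : F c = 0)
    (hu : IsNewtonSolOn F (Icc a b) u u') (hab : a ≤ b) (ha : u a ≠ c) (hb : u b = c) :
    u' b ≠ 0 := fun hb' =>
  ha (hu.eqOn_of_eq_right hF (isNewtonSolOn_const hc) hb hb' (left_mem_Icc.2 hab))

theorem deriv_ne_zero {G : ℝ → ℝ} (hG : ∀ y, HasDerivAt G (F y) y) (hG₀ : ∀ y, 0 ≤ G y)
    (hu : IsNewtonSolOn F (Icc a b) u u') (hub : G (u b) = 0) (hb' : u' b ≠ 0) :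
    ∀ x ∈ Icc a b, u' x ≠ 0 := fun x hx hx' => by
  have hab : a ≤ b := hx.1.trans hx.2
  have henergy := hu.energy_eq hG hx (right_mem_Icc.2 hab)
  rw [hx', hub] at henergy
  have := hG₀ (u x)
  have : 0 < u' b ^ 2 := by positivity
  linarith

end IsNewtonSolOn

/-- The (unique) `C²` solution of `(1/λ²) q'' = (q² − 4) q` on `(−1,1)` with
`q(−1) = 2`, `q(1) = −2` is odd: `q(−x) = −q(x)` for all `x ∈ [−1,1]`. -/
theorem bvp_solution_odd (lam : ℝ) (hlam : 0 < lam)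
    (q : ℝ → ℝ) (hq : ContDiff ℝ 2 q)
    (hode : ∀ x ∈ Set.Icc (-1 : ℝ) 1,
      (1 / lam ^ 2) * deriv (deriv q) x = ((q x) ^ 2 - 4) * q x)
    (hbc1 : q (-1) = 2) (hbc2 : q 1 = -2) :
    ∀ x ∈ Set.Icc (-1 : ℝ) 1, q (-x) = - q x := by
  set F : ℝ → ℝ := fun y => lam ^ 2 * ((y ^ 2 - 4) * y) with hF_def
  have hF : ContDiff ℝ 1 F := by fun_prop
  have hG := hasDerivAt_doubleWell (lam ^ 2) 4
  have hq' : ContDiff ℝ 1 (deriv q) := (contDiff_succ_iff_deriv.1 hq).2.2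
  have hsol : IsNewtonSolOn F (Icc (-1) 1) q (deriv q) := fun x hx => by
    have hq'' : deriv (deriv q) x = F (q x) := by
      have h := hode x hx
      rwa [one_div, inv_mul_eq_iff_eq_mul₀ (by positivity)] at h
    exact ⟨(hq.differentiable two_ne_zero x).hasDerivAt,
      hq'' ▸ (hq'.differentiable one_ne_zero x).hasDerivAt⟩
  have hp1 : deriv q 1 ≠ 0 :=
    hsol.deriv_right_ne_zero hF (by norm_num [hF_def]) (by norm_num) (by norm_num [hbc1]) hbc2
  have hp : deriv q (-1) = deriv q 1 := by
    refine hq'.continuous.continuousOn.eq_of_sq_eq_of_ne_zero (by norm_num)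
      (hsol.deriv_ne_zero hG (fun y => by positivity) (by norm_num [hbc2]) hp1) ?_
    simpa [hbc1, hbc2] using
      hsol.energy_eq hG (left_mem_Icc.2 (by norm_num)) (right_mem_Icc.2 (by norm_num))
  have hreflect := hsol.comp_neg fun y => by simp only [hF_def]; ring
  rw [neg_Icc, neg_neg] at hreflect
  intro x hx
  have := hreflect.eqOn_of_eq_right hF hsol (by simp [hbc1, hbc2]) (by simp [hp]) hx
  linarith
end

section
/- Let q : ℝ → ℝ be a C² solution of q'' = (q² − 4)q on the real line with finite energy ∫_ℝ [(q')² + (q² − 4)²] dx < ∞, odd, nonincreasing, and satisfying q(−∞) = 2, q(+∞) = −2. Then h = q' is nonzero, belongs to H¹(ℝ), solves h'' = (3q² − 4)h, and satisfies ∫_ℝ [(h')² + (q² − 4)h²] dx = −2 ∫_ℝ q² h² dx < 0. In particular the Schrödinger-type quadratic form h ↦ ∫ [(h')² + (q²−4)h²] has a negative direction. -/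
/-!
Multiplying the equation by `q'` shows that `(q')²/2 - (q² - 4)²/4` is constant; the constant is
`0` because `(q')²` is integrable and `q² - 4 → 0`, so `(q')² = (q² - 4)²/2`. Hence `q'` vanishes
nowhere on `{|q| < 2}`, and, `q` being bounded, `(q'')² = 2 q² (q')²` is integrable.
Differentiating the equation gives `h'' = (3q² - 4) h` for `h = q'`; since `h, h' ∈ L²`, the
product `h h'` is integrable with integrable derivative `(h')² + (3q² - 4) h²`, whose integral
therefore vanishes. Subtracting `2 q² h²` gives the identity, and the right-hand side is negative
because `q² h² > 0` where `q = 1`.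
-/

open MeasureTheory Filter Set Topology

theorem Continuous.exists_forall_norm_le_of_tendsto_atBot_atTop {E : Type*}
    [NormedAddCommGroup E] {f : ℝ → E} (hf : Continuous f) {a b : E}
    (hbot : Tendsto f atBot (𝓝 a)) (htop : Tendsto f atTop (𝓝 b)) :
    ∃ C, ∀ x, ‖f x‖ ≤ C := by
  obtain ⟨s, hs⟩ := eventually_atBot.1 (hbot.norm.eventually_le_const (lt_add_one ‖a‖))
  obtain ⟨t, ht⟩ := eventually_atTop.1 (htop.norm.eventually_le_const (lt_add_one ‖b‖))
  obtain ⟨C, hC⟩ := isCompact_Icc.exists_bound_of_continuousOn (s := Icc s t) hf.continuousOn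
  refine ⟨max C (max (‖a‖ + 1) (‖b‖ + 1)), fun x => ?_⟩
  rcases le_or_gt x s with hxs | hsx
  · exact (hs x hxs).trans (by simp)
  rcases le_or_gt t x with htx | hxt
  · exact (ht x htx).trans (by simp)
  · exact (hC x ⟨hsx.le, hxt.le⟩).trans (le_max_left _ _)

theorem integrable_mul_of_integrable_sq {α : Type*} [MeasurableSpace α] {μ : Measure α}
    {f g : α → ℝ} (hf : AEStronglyMeasurable f μ) (hg : AEStronglyMeasurable g μ)
    (hf2 : Integrable (fun x => f x ^ 2) μ) (hg2 : Integrable (fun x => g x ^ 2) μ) :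
    Integrable (fun x => f x * g x) μ := by
  refine ((hf2.add hg2).div_const 2).mono' (hf.mul hg) (ae_of_all _ fun x => ?_)
  simp only [Pi.add_apply, Real.norm_eq_abs, abs_le]
  constructor <;> nlinarith [sq_nonneg (f x + g x), sq_nonneg (f x - g x)]

section EnergyConservation

variable {q W W' : ℝ → ℝ}

theorem deriv_sq_div_two_sub_comp_eq (hq : Differentiable ℝ q)
    (hq' : Differentiable ℝ (deriv q)) (hW : ∀ y, HasDerivAt W (W' y) y)
    (hode : ∀ x, deriv (deriv q) x = W' (q x)) (x y : ℝ) :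
    deriv q x ^ 2 / 2 - W (q x) = deriv q y ^ 2 / 2 - W (q y) := by
  have hE : ∀ x, HasDerivAt (fun x => deriv q x ^ 2 / 2 - W (q x)) 0 x := fun x => by
    refine ((((hq' x).hasDerivAt.pow 2).div_const 2).sub
      ((hW (q x)).comp x (hq x).hasDerivAt)).congr_deriv ?_
    rw [hode]; ring
  exact is_const_of_deriv_eq_zero (fun x => (hE x).differentiableAt) (fun x => (hE x).deriv) x y

theorem sq_deriv_eq_two_mul_comp_of_integrable (hq : Differentiable ℝ q)
    (hq' : Differentiable ℝ (deriv q)) (hW : ∀ y, HasDerivAt W (W' y) y) (hW0 : ∀ y, 0 ≤ W y)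
    (hode : ∀ x, deriv (deriv q) x = W' (q x)) (hint : Integrable (fun x => deriv q x ^ 2))
    (hlim : Tendsto (fun x => W (q x)) atTop (𝓝 0)) (x : ℝ) :
    deriv q x ^ 2 = 2 * W (q x) := by
  set c := deriv q 0 ^ 2 / 2 - W (q 0)
  have hc : ∀ x, deriv q x ^ 2 / 2 - W (q x) = c :=
    fun x => deriv_sq_div_two_sub_comp_eq hq hq' hW hode x 0
  have hc_nonneg : 0 ≤ c :=
    le_of_tendsto' (by simpa using hlim.neg) fun x => by linarith [hc x, sq_nonneg (deriv q x)]
  -- A positive energy would bound `(q')²` below by the constant `2c`, which is not integrable.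
  have hc_nonpos : c ≤ 0 := by
    by_contra! hpos
    have hconst : Integrable (fun _ : ℝ => 2 * c) :=
      hint.mono' aestronglyMeasurable_const (ae_of_all _ fun x => by
        rw [Real.norm_eq_abs, abs_of_pos (by positivity)]; linarith [hc x, hW0 (q x)])
    rcases integrable_const_iff.1 hconst with h | h
    · linarith
    · exact absurd h.measure_univ_lt_top (by simp)
  linarith [hc x]

end EnergyConservation

theorem integral_deriv_sq_add_mul_sq_eq_zero {h V : ℝ → ℝ} (hh : Differentiable ℝ h)
    (hh' : Differentiable ℝ (deriv h)) (heq : ∀ x, deriv (deriv h) x = V x * h x)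
    (hint : Integrable (fun x => h x ^ 2)) (hint' : Integrable (fun x => deriv h x ^ 2))
    (hV : Integrable (fun x => V x * h x ^ 2)) :
    ∫ x, (deriv h x ^ 2 + V x * h x ^ 2) = 0 := by
  have hΦ : ∀ x, HasDerivAt (fun x => h x * deriv h x) (deriv h x ^ 2 + V x * h x ^ 2) x :=
    fun x => by
      refine ((hh x).hasDerivAt.mul (hh' x).hasDerivAt).congr_deriv ?_
      rw [heq]; ring
  exact integral_eq_zero_of_hasDerivAt_of_integrable hΦ (hint'.add hV)
    (integrable_mul_of_integrable_sq hh.continuous.aestronglyMeasurable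
      hh'.continuous.aestronglyMeasurable hint hint')

section Kink

variable {q : ℝ → ℝ}

theorem sq_deriv_eq_of_finite_energy (hq : ContDiff ℝ 2 q)
    (hode : ∀ x, deriv (deriv q) x = (q x ^ 2 - 4) * q x)
    (hint : Integrable (fun x => deriv q x ^ 2)) (hlim : Tendsto q atTop (𝓝 (-2))) (x : ℝ) :
    deriv q x ^ 2 = (q x ^ 2 - 4) ^ 2 / 2 := by
  have hW : ∀ y : ℝ, HasDerivAt (fun y => (y ^ 2 - 4) ^ 2 / 4) ((y ^ 2 - 4) * y) y := fun y => by
    refine ((((hasDerivAt_pow 2 y).sub_const 4).pow 2).div_const 4).congr_deriv ?_; ring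
  have hWlim : Tendsto (fun x => (q x ^ 2 - 4) ^ 2 / 4) atTop (𝓝 0) := by
    convert (((hlim.pow 2).sub_const 4).pow 2).div_const 4 using 2; norm_num
  have := sq_deriv_eq_two_mul_comp_of_integrable (hq.differentiable two_ne_zero)
    hq.differentiable_deriv_two hW (fun y => by positivity) hode hint hWlim x
  linarith

theorem hasDerivAt_deriv_deriv (hq : Differentiable ℝ q)
    (hode : ∀ x, deriv (deriv q) x = (q x ^ 2 - 4) * q x) (x : ℝ) :
    HasDerivAt (deriv (deriv q)) ((3 * q x ^ 2 - 4) * deriv q x) x := by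
  rw [funext hode]
  refine ((((hq x).hasDerivAt.pow 2).sub_const 4).mul (hq x).hasDerivAt).congr_deriv ?_
  simp only [Pi.pow_apply]; ring

theorem integral_deriv_deriv_sq_add_eq (hq : ContDiff ℝ 2 q)
    (hode : ∀ x, deriv (deriv q) x = (q x ^ 2 - 4) * q x)
    (hint : Integrable (fun x => deriv q x ^ 2))
    (hint' : Integrable (fun x => deriv (deriv q) x ^ 2))
    (hqh : Integrable (fun x => q x ^ 2 * deriv q x ^ 2)) :
    ∫ x, (deriv (deriv q) x ^ 2 + (q x ^ 2 - 4) * deriv q x ^ 2) =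
      -2 * ∫ x, q x ^ 2 * deriv q x ^ 2 := by
  have h3 := hasDerivAt_deriv_deriv (hq.differentiable two_ne_zero) hode
  have hV : Integrable (fun x => (3 * q x ^ 2 - 4) * deriv q x ^ 2) :=
    ((hqh.const_mul 3).sub (hint.const_mul 4)).congr
      (ae_of_all _ fun x => by simp only [Pi.sub_apply]; ring)
  have hIG : Integrable (fun x => deriv (deriv q) x ^ 2 + (3 * q x ^ 2 - 4) * deriv q x ^ 2) :=
    hint'.add hV
  have hzero := integral_deriv_sq_add_mul_sq_eq_zero hq.differentiable_deriv_two
    (fun x => (h3 x).differentiableAt) (fun x => (h3 x).deriv) hint hint' hV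
  calc _ = ∫ x, ((deriv (deriv q) x ^ 2 + (3 * q x ^ 2 - 4) * deriv q x ^ 2)
          - 2 * (q x ^ 2 * deriv q x ^ 2)) := by congr 1; ext x; ring
    _ = -2 * ∫ x, q x ^ 2 * deriv q x ^ 2 := by
      rw [integral_sub hIG (hqh.const_mul 2), hzero, integral_const_mul]; ring

end Kink

theorem heteroclinic_negative_direction_general (q : ℝ → ℝ) (hq : ContDiff ℝ 2 q)
    (hode : ∀ x : ℝ, deriv (deriv q) x = ((q x) ^ 2 - 4) * q x)
    (hE1 : Integrable (fun x => (deriv q x) ^ 2))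
    (hlim1 : Tendsto q atBot (nhds 2))
    (hlim2 : Tendsto q atTop (nhds (-2))) :
    (deriv q ≠ 0) ∧
    Integrable (fun x => (deriv q x) ^ 2) ∧
    Integrable (fun x => (deriv (deriv q) x) ^ 2) ∧
    (∀ x : ℝ, deriv (deriv (deriv q)) x = (3 * (q x) ^ 2 - 4) * deriv q x) ∧
    (∫ x : ℝ, ((deriv (deriv q) x) ^ 2 + ((q x) ^ 2 - 4) * (deriv q x) ^ 2)) =
      -2 * ∫ x : ℝ, (q x) ^ 2 * (deriv q x) ^ 2 ∧
    (∫ x : ℝ, ((deriv (deriv q) x) ^ 2 + ((q x) ^ 2 - 4) * (deriv q x) ^ 2)) < 0 := by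
  have hq1 : Differentiable ℝ q := hq.differentiable two_ne_zero
  have hkey := sq_deriv_eq_of_finite_energy hq hode hE1 hlim2
  obtain ⟨M, hM⟩ := hq1.continuous.exists_forall_norm_le_of_tendsto_atBot_atTop hlim1 hlim2
  have hqh : Integrable (fun x => q x ^ 2 * deriv q x ^ 2) :=
    hE1.bdd_mul (hq1.continuous.pow 2).aestronglyMeasurable (c := M ^ 2)
      (ae_of_all _ fun x => by simpa using pow_le_pow_left₀ (norm_nonneg _) (hM x) 2)
  have hint' : Integrable (fun x => deriv (deriv q) x ^ 2) := by
    refine (hqh.const_mul 2).congr (ae_of_all _ fun x => ?_)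
    simp only [hode, hkey]; ring
  have hform := integral_deriv_deriv_sq_add_eq hq hode hE1 hint' hqh
  obtain ⟨x₀, -, hx₀⟩ : (1 : ℝ) ∈ q '' univ :=
    isPreconnected_univ.intermediate_value_Ioo (by simp) (by simp) hq1.continuous.continuousOn
      hlim2 hlim1 (by norm_num)
  have hx₀' : deriv q x₀ ^ 2 = 9 / 2 := by rw [hkey, hx₀]; norm_num
  have hpos : 0 < ∫ x, q x ^ 2 * deriv q x ^ 2 :=
    integral_pos_of_integrable_nonneg_nonzero
      ((hq1.continuous.pow 2).mul ((hq.continuous_deriv one_le_two).pow 2)) hqh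
      (fun x => by positivity) (x := x₀) (by rw [hx₀', hx₀]; norm_num)
  refine ⟨fun h => ?_, hE1, hint', fun x => (hasDerivAt_deriv_deriv hq1 hode x).deriv, hform,
    by rw [hform]; linarith⟩
  rw [h] at hx₀'
  norm_num at hx₀'

/-- Let `q : ℝ → ℝ` be a `C²`, odd, nonincreasing, finite-energy solution of
`q'' = (q² − 4)q` on the line with `q(−∞) = 2`, `q(+∞) = −2`. Then `h = q'` is
nonzero, belongs to `H¹(ℝ)`, solves the linearized equation `h'' = (3q² − 4)h`, and
`∫ [(h')² + (q² − 4)h²] = −2 ∫ q² h² < 0`; in particular the Schrödinger-type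
quadratic form `h ↦ ∫ [(h')² + (q²−4)h²]` has a negative direction. -/
theorem heteroclinic_negative_direction (q : ℝ → ℝ) (hq : ContDiff ℝ 2 q)
    (hode : ∀ x : ℝ, deriv (deriv q) x = ((q x) ^ 2 - 4) * q x)
    (hE1 : Integrable (fun x => (deriv q x) ^ 2))
    (hE2 : Integrable (fun x => ((q x) ^ 2 - 4) ^ 2))
    (hodd : ∀ x : ℝ, q (-x) = - q x)
    (hmono : Antitone q)
    (hlim1 : Tendsto q atBot (nhds 2))
    (hlim2 : Tendsto q atTop (nhds (-2))) :
    (deriv q ≠ 0) ∧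
    Integrable (fun x => (deriv q x) ^ 2) ∧
    Integrable (fun x => (deriv (deriv q) x) ^ 2) ∧
    (∀ x : ℝ, deriv (deriv (deriv q)) x = (3 * (q x) ^ 2 - 4) * deriv q x) ∧
    (∫ x : ℝ, ((deriv (deriv q) x) ^ 2 + ((q x) ^ 2 - 4) * (deriv q x) ^ 2)) =
      -2 * ∫ x : ℝ, (q x) ^ 2 * (deriv q x) ^ 2 ∧
    (∫ x : ℝ, ((deriv (deriv q) x) ^ 2 + ((q x) ^ 2 - 4) * (deriv q x) ^ 2)) < 0 :=
  heteroclinic_negative_direction_general q hq hode hE1 hlim1 hlim2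
end

section
/- Let f : ℝ → ℝ be continuous with f(−∞) = a and f(+∞) = b where a ≠ b, and suppose f is differentiable with f' ∈ L²(ℝ). Then f' is not identically zero. More generally: if g : ℝ → ℝ satisfies ∫_ℝ [g'(x)² + (g(x)² − 4)²] dx < ∞, g continuous, then g(x)² → 4 as |x| → ∞. -/
/-!
Both terms of the energy control the bounded-slope quantity `u = (g² - a²) / (g² + 1)`:
`u² ≤ (g² - a²)²` and `|u'| ≤ (1 + a²) |g'|`. So `u ∈ H¹(ℝ)`, and `H¹` functions vanish at
infinity because `u²` and `(u²)' = 2 u u'` are both integrable. Hence `g² → a²`, and since `g`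
cannot change sign once `g²` stays away from `0`, `g → a` or `g → -a` at each end.
-/

open MeasureTheory Filter Topology

section VanishingAtInfinity

variable {u : ℝ → ℝ}

lemma integrable_two_mul_mul_deriv (hu : Differentiable ℝ u)
    (hu2 : Integrable fun x => u x ^ 2) (hu'2 : Integrable fun x => deriv u x ^ 2) :
    Integrable fun x => 2 * u x * deriv u x := by
  refine (hu2.add hu'2).mono'
    ((hu.continuous.measurable.const_mul 2).mul (measurable_deriv u)).aestronglyMeasurable
    (Eventually.of_forall fun x => ?_)
  rw [Real.norm_eq_abs, Pi.add_apply, abs_le]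
  constructor <;> nlinarith [sq_nonneg (u x + deriv u x), sq_nonneg (u x - deriv u x)]

theorem tendsto_cocompact_zero_of_integrable_sq (hu : Differentiable ℝ u)
    (hu2 : Integrable fun x => u x ^ 2) (hu'2 : Integrable fun x => deriv u x ^ 2) :
    Tendsto u (cocompact ℝ) (𝓝 0) := by
  have hderiv : ∀ x, HasDerivAt (fun x => u x ^ 2) (2 * u x * deriv u x) x := fun x => by
    simpa using (hu x).hasDerivAt.fun_pow 2
  have hint := integrable_two_mul_mul_deriv hu hu2 hu'2
  have hsq : Tendsto (fun x => u x ^ 2) (cocompact ℝ) (𝓝 0) := by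
    rw [cocompact_eq_atBot_atTop]
    exact (tendsto_zero_of_hasDerivAt_of_integrableOn_Iic (a := 0) (fun x _ => hderiv x)
      hint.integrableOn hu2.integrableOn).sup
      (tendsto_zero_of_hasDerivAt_of_integrableOn_Ioi (a := 0) (fun x _ => hderiv x)
        hint.integrableOn hu2.integrableOn)
  exact squeeze_zero_norm (fun x => (Real.sqrt_sq_eq_abs (u x)).ge) (by simpa using hsq.sqrt)

end VanishingAtInfinity

section WellRatio

noncomputable def wellRatio (a t : ℝ) : ℝ := (t ^ 2 - a ^ 2) / (t ^ 2 + 1)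

variable (a t : ℝ)

lemma hasDerivAt_wellRatio :
    HasDerivAt (wellRatio a) (2 * (1 + a ^ 2) * t / (t ^ 2 + 1) ^ 2) t := by
  have hpos : t ^ 2 + 1 ≠ 0 := by positivity
  refine (((hasDerivAt_pow 2 t).sub_const (a ^ 2)).div
    ((hasDerivAt_pow 2 t).add_const 1) hpos).congr_deriv ?_
  push_cast
  ring

lemma abs_deriv_wellRatio_le : |deriv (wellRatio a) t| ≤ 1 + a ^ 2 := by
  rw [(hasDerivAt_wellRatio a t).deriv, abs_div, abs_mul,
    abs_of_pos (by positivity : (0:ℝ) < 2 * (1 + a ^ 2)),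
    abs_of_pos (by positivity : (0:ℝ) < (t ^ 2 + 1) ^ 2), div_le_iff₀ (by positivity)]
  have h2t : 2 * |t| ≤ (t ^ 2 + 1) ^ 2 := by nlinarith [sq_abs t, sq_nonneg (|t| - 1)]
  calc 2 * (1 + a ^ 2) * |t| = (1 + a ^ 2) * (2 * |t|) := by ring
    _ ≤ (1 + a ^ 2) * (t ^ 2 + 1) ^ 2 := by gcongr

lemma abs_wellRatio_le : |wellRatio a t| ≤ |t ^ 2 - a ^ 2| := by
  rw [wellRatio, abs_div, abs_of_pos (by positivity : (0:ℝ) < t ^ 2 + 1)]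
  exact div_le_self (abs_nonneg _) (by nlinarith [sq_nonneg t])

lemma sq_eq_wellRatio : t ^ 2 = (a ^ 2 + wellRatio a t) / (1 - wellRatio a t) := by
  have hpos : t ^ 2 + 1 ≠ 0 := by positivity
  have hne : 1 - wellRatio a t ≠ 0 := by
    rw [wellRatio, one_sub_div hpos]
    exact div_ne_zero (by ring_nf; positivity) hpos
  rw [eq_div_iff hne, wellRatio]
  field_simp
  ring

end WellRatio

theorem tendsto_sq_cocompact_of_finite_energy (a : ℝ) {g : ℝ → ℝ}
    (hg : Differentiable ℝ g) (h1 : Integrable fun x => deriv g x ^ 2)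
    (h2 : Integrable fun x => (g x ^ 2 - a ^ 2) ^ 2) :
    Tendsto (fun x => g x ^ 2) (cocompact ℝ) (𝓝 (a ^ 2)) := by
  set u := wellRatio a ∘ g with hu_def
  have hdiff : Differentiable ℝ (wellRatio a) := fun t =>
    (hasDerivAt_wellRatio a t).differentiableAt
  have hu : Differentiable ℝ u := hdiff.comp hg
  have hu2 : Integrable fun x => u x ^ 2 := by
    refine h2.mono' (hu.continuous.measurable.pow_const 2).aestronglyMeasurable
      (Eventually.of_forall fun x => ?_)
    rw [Real.norm_eq_abs, abs_of_nonneg (sq_nonneg _), ← sq_abs, ← sq_abs (g x ^ 2 - a ^ 2)]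
    exact pow_le_pow_left₀ (abs_nonneg _) (abs_wellRatio_le a (g x)) 2
  have hu'2 : Integrable fun x => deriv u x ^ 2 := by
    refine (h1.const_mul ((1 + a ^ 2) ^ 2)).mono'
      ((measurable_deriv u).pow_const 2).aestronglyMeasurable (Eventually.of_forall fun x => ?_)
    rw [Real.norm_eq_abs, abs_of_nonneg (sq_nonneg _), hu_def,
      deriv_comp x (hdiff (g x)) (hg x), mul_pow, ← sq_abs (deriv (wellRatio a) (g x))]
    gcongr
    exact abs_deriv_wellRatio_le a (g x)
  have hu0 := tendsto_cocompact_zero_of_integrable_sq hu hu2 hu'2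
  have hlim := (hu0.const_add (a ^ 2)).div (hu0.const_sub 1) (by norm_num)
  rw [add_zero, sub_zero, div_one] at hlim
  exact hlim.congr fun x => (sq_eq_wellRatio a (g x)).symm

theorem tendsto_or_tendsto_neg_of_tendsto_sq {X ι : Type*} [TopologicalSpace X] {f : X → ℝ}
    (hf : Continuous f) {l : Filter X} {p : ι → Prop} {s : ι → Set X} (hl : l.HasBasis p s)
    (hs : ∀ i, p i → IsPreconnected (s i)) {a : ℝ} (ha : 0 < a)
    (h : Tendsto (fun x => f x ^ 2) l (𝓝 (a ^ 2))) :
    Tendsto f l (𝓝 a) ∨ Tendsto f l (𝓝 (-a)) := by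
  have habs : Tendsto (fun x => |f x|) l (𝓝 a) := by
    simpa [Real.sqrt_sq_eq_abs, Real.sqrt_sq ha.le] using h.sqrt
  obtain ⟨i, hi, hne⟩ :=
    hl.eventually_iff.1 (h.eventually (eventually_ne_nhds (pow_pos ha 2).ne'))
  have hsl : s i ∈ l := hl.mem_of_mem hi
  rcases (hs i hi).eq_or_eq_neg_of_sq_eq hf.continuousOn (continuous_abs.comp hf).continuousOn
    (fun x _ => by simp [sq_abs])
    (fun hx => abs_ne_zero.2 (pow_ne_zero_iff two_ne_zero |>.1 (hne hx))) with heq | heq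
  · exact Or.inl (habs.congr' (eventually_of_mem hsl fun x hx => (heq hx).symm))
  · exact Or.inr (habs.neg.congr' (eventually_of_mem hsl fun x hx => (heq hx).symm))

/-- If `g : ℝ → ℝ` is `C¹` with `∫ (g')² < ∞` and `∫ (g² − 4)² < ∞`, then
`g(x)² → 4` as `|x| → ∞`: `g` tends to `2` or to `−2` at `+∞`, and likewise at `−∞`. -/
theorem finite_energy_limits (g : ℝ → ℝ) (hg : ContDiff ℝ 1 g)
    (h1 : Integrable (fun x => (deriv g x) ^ 2))
    (h2 : Integrable (fun x => ((g x) ^ 2 - 4) ^ 2)) :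
    (Tendsto g atTop (nhds 2) ∨ Tendsto g atTop (nhds (-2))) ∧
    (Tendsto g atBot (nhds 2) ∨ Tendsto g atBot (nhds (-2))) := by
  have hsq := tendsto_sq_cocompact_of_finite_energy 2 (hg.differentiable one_ne_zero) h1
    (by norm_num [h2])
  exact ⟨tendsto_or_tendsto_neg_of_tendsto_sq hg.continuous atTop_basis
      (fun _ _ => isPreconnected_Ici) two_pos (hsq.mono_left atTop_le_cocompact),
    tendsto_or_tendsto_neg_of_tendsto_sq hg.continuous atBot_basis
      (fun _ _ => isPreconnected_Iic) two_pos (hsq.mono_left atBot_le_cocompact)⟩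
end

section
/- Let Q : [−1,1] → Sym₀(3) (traceless symmetric 3×3 real matrices) be a C² solution of (1/λ²) Q'' = (θ/3) Q − 2(Q² − (|Q|²/3) I) + (1/2)|Q|² Q, where λ > 0, θ < 1, and |Q|² = tr(Q²). Then |Q(x)| ≤ max(|Q(−1)|, |Q(1)|, 2√6 q₊) for all x ∈ [−1,1], where 6 q₊ = 1 + √(1 − θ). In particular, if the boundary data satisfy |Q(±1)| ≤ 2√6 q₊, then |Q| ≤ 2√6 q₊ everywhere. -/
/-- The squared Frobenius norm `|A|² = ∑ᵢⱼ Aᵢⱼ² = tr(A²)` (for symmetric `A`). -/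
noncomputable def mnorm2 (A : Matrix (Fin 3) (Fin 3) ℝ) : ℝ :=
  ∑ i : Fin 3, ∑ j : Fin 3, (A i j) ^ 2

/-!
At an interior maximum point `x₀` of `|Q|²` the second derivative test gives
`∑ᵢⱼ Qᵢⱼ Qᵢⱼ'' ≤ 0`, and pairing the equation with `Q` turns this into
`(θ/3)|Q|² - 2 tr Q³ + |Q|⁴/2 ≤ 0`. The eigenvalues of the traceless symmetric `Q` sum to zero,
whence `(tr Q³)² ≤ |Q|⁶/6`, so `r = |Q(x₀)|` satisfies `r² (r²/2 - 2r/√6 + θ/3) ≤ 0`,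
which forces `r ≤ 2(1 + √(1 - θ))/√6 = 2√6 q₊`.
-/

open Filter Topology Matrix

theorem IsLocalMax.deriv_deriv_nonpos {f : ℝ → ℝ} {x₀ : ℝ} (h : IsLocalMax f x₀)
    (hc : ContinuousAt f x₀) : deriv (deriv f) x₀ ≤ 0 := by
  by_contra! hpos
  have hconst : f =ᶠ[𝓝 x₀] fun _ => f x₀ :=
    ((isLocalMin_of_deriv_deriv_pos hpos h.deriv_eq_zero hc).and h).mono
      fun _ hx => le_antisymm hx.2 hx.1
  refine hpos.ne' ?_
  rw [hconst.deriv.deriv_eq]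
  simp

theorem deriv_deriv_fun_sum {ι : Type*} {u : Finset ι} {A : ι → ℝ → ℝ}
    (hA : ∀ i ∈ u, ContDiff ℝ 2 (A i)) (x : ℝ) :
    deriv (deriv fun y => ∑ i ∈ u, A i y) x = ∑ i ∈ u, deriv (deriv (A i)) x := by
  have hderiv : deriv (fun y => ∑ i ∈ u, A i y) = fun y => ∑ i ∈ u, deriv (A i) y :=
    funext fun y =>
      deriv_fun_sum fun i hi => ((hA i hi).differentiable two_ne_zero).differentiableAt
  rw [hderiv, deriv_fun_sum]
  intro i hi
  exact ((hA i hi).deriv' (n := 1)).differentiable one_ne_zero |>.differentiableAt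

theorem deriv_deriv_sq {g : ℝ → ℝ} (hg : ContDiff ℝ 2 g) (x : ℝ) :
    deriv (deriv fun t => g t ^ 2) x = 2 * (deriv g x ^ 2 + g x * deriv (deriv g) x) := by
  have hg₁ : Differentiable ℝ g := hg.differentiable two_ne_zero
  have hg₂ : Differentiable ℝ (deriv g) := (hg.deriv' (n := 1)).differentiable one_ne_zero
  have hderiv : deriv (fun t => g t ^ 2) = fun t => 2 * g t * deriv g t := by
    funext t
    simpa using ((hg₁ t).hasDerivAt.fun_pow 2).deriv
  rw [hderiv]
  convert (((hg₁ x).hasDerivAt.const_mul 2).fun_mul (hg₂ x).hasDerivAt).deriv using 1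
  ring

theorem sum_mul_deriv_deriv_nonpos_of_isLocalMax {ι : Type*} [Fintype ι] {g : ι → ℝ → ℝ}
    {x₀ : ℝ} (hg : ∀ k, ContDiff ℝ 2 (g k)) (hmax : IsLocalMax (fun t => ∑ k, g k t ^ 2) x₀) :
    ∑ k, g k x₀ * deriv (deriv (g k)) x₀ ≤ 0 := by
  have hcont : ContinuousAt (fun t => ∑ k, g k t ^ 2) x₀ :=
    (continuous_finsetSum _ fun k _ => ((hg k).continuous.pow 2)).continuousAt
  have h := hmax.deriv_deriv_nonpos hcont
  rw [deriv_deriv_fun_sum fun k _ => (hg k).pow 2] at h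
  simp only [deriv_deriv_sq (hg _), ← Finset.mul_sum, Finset.sum_add_distrib] at h
  have hsq : 0 ≤ ∑ k, deriv (g k) x₀ ^ 2 := Finset.sum_nonneg fun k _ => sq_nonneg _
  linarith

theorem sum_sum_mul_deriv_deriv_nonpos_of_isLocalMax {m n : Type*} [Fintype m] [Fintype n]
    {Q : ℝ → Matrix m n ℝ} {x₀ : ℝ} (hQ : ∀ i j, ContDiff ℝ 2 fun t => Q t i j)
    (hmax : IsLocalMax (fun t => ∑ i, ∑ j, Q t i j ^ 2) x₀) :
    ∑ i, ∑ j, Q x₀ i j * deriv (deriv fun t => Q t i j) x₀ ≤ 0 := by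
  simp only [← Fintype.sum_prod_type'] at hmax ⊢
  exact sum_mul_deriv_deriv_nonpos_of_isLocalMax (g := fun (p : m × n) t => Q t p.1 p.2)
    (fun p => hQ p.1 p.2) hmax

theorem sum_sum_mul_eq_trace_transpose_mul {m n R : Type*} [Fintype m] [Fintype n]
    [CommSemiring R] (A B : Matrix m n R) :
    ∑ i, ∑ j, A i j * B i j = trace (Aᵀ * B) := by
  simp only [trace, diag, mul_apply, transpose_apply]
  exact Finset.sum_comm

theorem Matrix.IsHermitian.trace_pow {n 𝕜 : Type*} [Fintype n] [DecidableEq n] [RCLike 𝕜]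
    {A : Matrix n n 𝕜} (hA : A.IsHermitian) (k : ℕ) :
    (A ^ k).trace = ∑ i, (hA.eigenvalues i : 𝕜) ^ k := by
  conv_lhs => rw [hA.spectral_theorem, ← map_pow, Unitary.conjStarAlgAut_apply, trace_mul_cycle,
    Unitary.coe_star_mul_self, one_mul, diagonal_pow, trace_diagonal]
  rfl

theorem sq_sum_cubes_le_of_sum_eq_zero {a b c : ℝ} (h : a + b + c = 0) :
    (a ^ 3 + b ^ 3 + c ^ 3) ^ 2 ≤ (a ^ 2 + b ^ 2 + c ^ 2) ^ 3 / 6 := by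
  obtain rfl : c = -a - b := by linarith
  nlinarith [sq_nonneg (a - b), sq_nonneg (a + b), sq_nonneg (a * b), sq_nonneg (a * b * (a + b)),
    sq_nonneg ((a - b) * (2 * a + b)), sq_nonneg ((a + 2 * b) * (2 * a + b))]

theorem trace_pow_three_sq_le {A : Matrix (Fin 3) (Fin 3) ℝ} (hA : A.IsSymm)
    (htr : A.trace = 0) : trace (A ^ 3) ^ 2 ≤ trace (A ^ 2) ^ 3 / 6 := by
  have hH : A.IsHermitian := hA
  rw [hH.trace_pow, hH.trace_pow]
  rw [hH.trace_eq_sum_eigenvalues] at htr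
  simp only [Fin.sum_univ_three, RCLike.ofReal_real_eq_id, id] at htr ⊢
  exact sq_sum_cubes_le_of_sum_eq_zero htr

theorem mnorm2_nonneg (A : Matrix (Fin 3) (Fin 3) ℝ) : 0 ≤ mnorm2 A :=
  Finset.sum_nonneg fun _ _ => Finset.sum_nonneg fun _ _ => sq_nonneg _

theorem mnorm2_eq_trace_sq {A : Matrix (Fin 3) (Fin 3) ℝ} (hA : A.IsSymm) :
    mnorm2 A = trace (A ^ 2) := by
  calc mnorm2 A = ∑ i, ∑ j, A i j * A i j := by simp only [mnorm2, pow_two]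
    _ = trace (A ^ 2) := by rw [sum_sum_mul_eq_trace_transpose_mul, hA.eq, pow_two]

noncomputable def qtensorRhs (θ : ℝ) (A : Matrix (Fin 3) (Fin 3) ℝ) : Matrix (Fin 3) (Fin 3) ℝ :=
  of fun i j => (θ / 3) * A i j - 2 * ((A * A) i j - (mnorm2 A / 3) * (1 : Matrix _ _ ℝ) i j)
    + (1 / 2) * mnorm2 A * A i j

theorem sum_sum_mul_qtensorRhs_eq {A : Matrix (Fin 3) (Fin 3) ℝ} (hA : A.IsSymm)
    (htr : A.trace = 0) (θ : ℝ) :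
    ∑ i, ∑ j, A i j * qtensorRhs θ A i j =
      θ / 3 * mnorm2 A - 2 * trace (A ^ 3) + mnorm2 A ^ 2 / 2 := by
  have hcube : ∑ i, ∑ j, A i j * (A * A) i j = trace (A ^ 3) := by
    rw [sum_sum_mul_eq_trace_transpose_mul, hA.eq, pow_three]
  have hone : ∑ i, ∑ j, A i j * (1 : Matrix _ _ ℝ) i j = 0 := by
    rw [sum_sum_mul_eq_trace_transpose_mul, mul_one, trace_transpose, htr]
  calc _ = θ / 3 * mnorm2 A - 2 * (∑ i, ∑ j, A i j * (A * A) i j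
          - mnorm2 A / 3 * ∑ i, ∑ j, A i j * (1 : Matrix _ _ ℝ) i j) + mnorm2 A / 2 * mnorm2 A := by
        simp only [qtensorRhs, of_apply, mnorm2, Fin.sum_univ_three]; ring
    _ = _ := by rw [hcube, hone]; ring

noncomputable def qPlus (θ : ℝ) : ℝ := (1 + √(1 - θ)) / 6

theorem sqrt_le_two_sqrt_six_mul_qPlus {θ s T : ℝ} (hs : 0 ≤ s) (hT : T ^ 2 ≤ s ^ 3 / 6)
    (h : θ / 3 * s - 2 * T + s ^ 2 / 2 ≤ 0) : √s ≤ 2 * √6 * qPlus θ := by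
  set r := √s
  set c := √6
  set w := √(1 - θ)
  have hr₀ : 0 ≤ r := Real.sqrt_nonneg s
  have hs : r ^ 2 = s := Real.sq_sqrt hs
  have hc : c ^ 2 = 6 := Real.sq_sqrt (by norm_num)
  have hc₀ : 0 < c := by positivity
  have hw₀ : 0 ≤ w := Real.sqrt_nonneg _
  have hθ : 1 - θ ≤ w ^ 2 := by
    rcases le_total 0 (1 - θ) with hθ | hθ
    · exact (Real.sq_sqrt hθ).ge
    · nlinarith
  have hTc : T * c ≤ r ^ 3 := by
    have : (T * c) ^ 2 ≤ (r ^ 3) ^ 2 :=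
      calc (T * c) ^ 2 = T ^ 2 * 6 := by rw [mul_pow, hc]
        _ ≤ s ^ 3 := by linarith
        _ = (r ^ 3) ^ 2 := by rw [← hs]; ring
    exact (abs_le_of_sq_le_sq this (by positivity)).trans' (le_abs_self _)
  have hquartic : 3 * r ^ 4 - 2 * c * r ^ 3 + 2 * θ * r ^ 2 ≤ 0 := by
    rw [← hs] at h
    linear_combination 6 * h + 2 * c * hTc - 2 * T * hc
  rw [qPlus]
  by_contra! hr
  have hr₁ : c * (1 + w) / 3 < r := by linarith
  have hr₂ : c * (1 - w) / 3 < r := by nlinarith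
  have hfactor : 0 < r ^ 2 * ((r - c * (1 + w) / 3) * (r - c * (1 - w) / 3)) :=
    mul_pos (pow_pos (by nlinarith) 2) (mul_pos (sub_pos.2 hr₁) (sub_pos.2 hr₂))
  have hexpand : r ^ 2 * ((r - c * (1 + w) / 3) * (r - c * (1 - w) / 3)) =
      r ^ 4 - 2 * c / 3 * r ^ 3 + 2 / 3 * (1 - w ^ 2) * r ^ 2 := by
    linear_combination (1 - w ^ 2) * r ^ 2 / 9 * hc
  nlinarith [mul_le_mul_of_nonneg_right hθ (sq_nonneg r)]

theorem sqrt_mnorm2_le_of_isLocalMax {lam θ x₀ : ℝ} {Q : ℝ → Matrix (Fin 3) (Fin 3) ℝ}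
    (hsymm : (Q x₀).IsSymm) (htrace : (Q x₀).trace = 0)
    (hC2 : ∀ i j, ContDiff ℝ 2 fun t => Q t i j)
    (hode : ∀ i j, 1 / lam ^ 2 * deriv (deriv fun t => Q t i j) x₀ = qtensorRhs θ (Q x₀) i j)
    (hmax : IsLocalMax (fun t => mnorm2 (Q t)) x₀) :
    √(mnorm2 (Q x₀)) ≤ 2 * √6 * qPlus θ := by
  have hforce : θ / 3 * mnorm2 (Q x₀) - 2 * trace (Q x₀ ^ 3) + mnorm2 (Q x₀) ^ 2 / 2 ≤ 0 :=
    calc _ = ∑ i, ∑ j, Q x₀ i j * qtensorRhs θ (Q x₀) i j :=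
          (sum_sum_mul_qtensorRhs_eq hsymm htrace θ).symm
      _ = 1 / lam ^ 2 * ∑ i, ∑ j, Q x₀ i j * deriv (deriv fun t => Q t i j) x₀ := by
          simp only [Finset.mul_sum]
          refine Finset.sum_congr rfl fun i _ => Finset.sum_congr rfl fun j _ => ?_
          rw [← hode]
          ring
      _ ≤ 0 := mul_nonpos_of_nonneg_of_nonpos (by positivity)
          (sum_sum_mul_deriv_deriv_nonpos_of_isLocalMax hC2 hmax)
  refine sqrt_le_two_sqrt_six_mul_qPlus (mnorm2_nonneg _) ?_ hforce
  rw [mnorm2_eq_trace_sq hsymm]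
  exact trace_pow_three_sq_le hsymm htrace

theorem qtensor_maximum_principle_general (lam θ : ℝ)
    (Q : ℝ → Matrix (Fin 3) (Fin 3) ℝ)
    (hsymm : ∀ x : ℝ, (Q x).IsSymm)
    (htrace : ∀ x : ℝ, Matrix.trace (Q x) = 0)
    (hC2 : ∀ i j : Fin 3, ContDiff ℝ 2 (fun t : ℝ => Q t i j))
    (hode : ∀ x ∈ Set.Icc (-1 : ℝ) 1, ∀ i j : Fin 3,
      (1 / lam ^ 2) * deriv (deriv (fun t : ℝ => Q t i j)) x =
        (θ / 3) * Q x i j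
          - 2 * ((Q x * Q x) i j - (mnorm2 (Q x) / 3) * (1 : Matrix (Fin 3) (Fin 3) ℝ) i j)
          + (1 / 2) * mnorm2 (Q x) * Q x i j) :
    ∀ x ∈ Set.Icc (-1 : ℝ) 1,
      Real.sqrt (mnorm2 (Q x)) ≤
        max (max (Real.sqrt (mnorm2 (Q (-1)))) (Real.sqrt (mnorm2 (Q 1))))
          (2 * Real.sqrt 6 * ((1 + Real.sqrt (1 - θ)) / 6)) := by
  intro x hx
  have hcont : Continuous fun t => mnorm2 (Q t) := by
    have hQ := fun i j => (hC2 i j).continuous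
    unfold mnorm2
    fun_prop
  obtain ⟨x₀, hx₀, hmax⟩ := isCompact_Icc.exists_isMaxOn
    (Set.nonempty_Icc.2 (by norm_num : (-1 : ℝ) ≤ 1)) hcont.continuousOn
  refine (Real.sqrt_le_sqrt (show mnorm2 (Q x) ≤ mnorm2 (Q x₀) from hmax hx)).trans ?_
  obtain rfl | hleft := hx₀.1.eq_or_lt
  · exact le_max_of_le_left (le_max_left _ _)
  obtain rfl | hright := hx₀.2.eq_or_lt'
  · exact le_max_of_le_left (le_max_right _ _)
  exact le_max_of_le_right <| sqrt_mnorm2_le_of_isLocalMax (hsymm x₀) (htrace x₀) hC2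
    (hode x₀ hx₀) (hmax.isLocalMax (Icc_mem_nhds hleft hright))

/-- **Maximum principle for the Q-tensor equation.** Let `Q : [−1,1] → Sym₀(3)` be a
`C²` (entrywise) solution of `(1/λ²) Q'' = (θ/3) Q − 2(Q² − (|Q|²/3) I) + (1/2)|Q|² Q`
with `λ > 0`, `θ < 1`. Then `|Q(x)| ≤ max(|Q(−1)|, |Q(1)|, 2√6 q₊)` on `[−1,1]`,
where `6 q₊ = 1 + √(1 − θ)`. -/
theorem qtensor_maximum_principle (lam θ : ℝ) (hlam : 0 < lam) (hθ : θ < 1)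
    (Q : ℝ → Matrix (Fin 3) (Fin 3) ℝ)
    (hsymm : ∀ x : ℝ, (Q x).IsSymm)
    (htrace : ∀ x : ℝ, Matrix.trace (Q x) = 0)
    (hC2 : ∀ i j : Fin 3, ContDiff ℝ 2 (fun t : ℝ => Q t i j))
    (hode : ∀ x ∈ Set.Icc (-1 : ℝ) 1, ∀ i j : Fin 3,
      (1 / lam ^ 2) * deriv (deriv (fun t : ℝ => Q t i j)) x =
        (θ / 3) * Q x i j
          - 2 * ((Q x * Q x) i j - (mnorm2 (Q x) / 3) * (1 : Matrix (Fin 3) (Fin 3) ℝ) i j)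
          + (1 / 2) * mnorm2 (Q x) * Q x i j) :
    ∀ x ∈ Set.Icc (-1 : ℝ) 1,
      Real.sqrt (mnorm2 (Q x)) ≤
        max (max (Real.sqrt (mnorm2 (Q (-1)))) (Real.sqrt (mnorm2 (Q 1))))
          (2 * Real.sqrt 6 * ((1 + Real.sqrt (1 - θ)) / 6)) :=
  qtensor_maximum_principle_general lam θ Q hsymm htrace hC2 hode
end

section
/- For any traceless symmetric 3×3 real matrix Q, one has |tr(Q³)| ≤ (1/√6) |Q|³, where |Q|² = tr(Q²), with equality if and only if Q is uniaxial, i.e., Q = s(n⊗n − I/3) for some s ∈ ℝ and unit vector n. -/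
/-!
Diagonalising `Q` reduces everything to its eigenvalues `a, b, c`, which sum to zero, and for
such numbers
`(a² + b² + c²)³ = 6 (a³ + b³ + c³)² + 2 ((a - b) (b - c) (c - a))²`.
This gives the bound, with equality iff two eigenvalues coincide. In that case the spectral
decomposition collapses to `a • 1 + (c - a) • v vᵀ`, with `v` a unit eigenvector for the third
eigenvalue `c`, and tracelessness (`c = -2a`) turns this into `(c - a) • (v vᵀ - 1 / 3)`.
Conversely a uniaxial `s • (n nᵀ - 1 / 3)` has `tr Q² = 2 s² / 3` and `tr Q³ = 2 s³ / 9`,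
which attain the bound.
-/

open Matrix

theorem sum_sq_pow_three_eq_of_add_add_eq_zero {R : Type*} [CommRing R] {a b c : R}
    (h : a + b + c = 0) :
    (a ^ 2 + b ^ 2 + c ^ 2) ^ 3 =
      6 * (a ^ 3 + b ^ 3 + c ^ 3) ^ 2 + 2 * ((a - b) * (b - c) * (c - a)) ^ 2 := by
  obtain rfl : c = -a - b := by linear_combination h
  ring

section Real

variable {a b c x t : ℝ}

theorem six_mul_sum_cube_sq_le (h : a + b + c = 0) :
    6 * (a ^ 3 + b ^ 3 + c ^ 3) ^ 2 ≤ (a ^ 2 + b ^ 2 + c ^ 2) ^ 3 := by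
  rw [sum_sq_pow_three_eq_of_add_add_eq_zero h]
  exact le_add_of_nonneg_right (by positivity)

theorem six_mul_sum_cube_sq_eq_iff (h : a + b + c = 0) :
    6 * (a ^ 3 + b ^ 3 + c ^ 3) ^ 2 = (a ^ 2 + b ^ 2 + c ^ 2) ^ 3 ↔ a = b ∨ b = c ∨ c = a := by
  rw [sum_sq_pow_three_eq_of_add_add_eq_zero h, left_eq_add]
  simp [sub_eq_zero, or_assoc]

theorem inv_sqrt_six_mul_sqrt_pow_three_sq (ht : 0 ≤ t) :
    (1 / √6 * √t ^ 3) ^ 2 = t ^ 3 / 6 := by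
  rw [mul_pow, div_pow, Real.sq_sqrt (by norm_num), ← pow_mul, mul_comm 3 2, pow_mul,
    Real.sq_sqrt ht]
  ring

theorem abs_le_inv_sqrt_six_mul_sqrt_pow_three_iff (ht : 0 ≤ t) :
    |x| ≤ 1 / √6 * √t ^ 3 ↔ 6 * x ^ 2 ≤ t ^ 3 := by
  rw [← abs_of_nonneg (by positivity : 0 ≤ 1 / √6 * √t ^ 3), ← sq_le_sq,
    inv_sqrt_six_mul_sqrt_pow_three_sq ht]
  constructor <;> intro <;> linarith

theorem abs_eq_inv_sqrt_six_mul_sqrt_pow_three_iff (ht : 0 ≤ t) :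
    |x| = 1 / √6 * √t ^ 3 ↔ 6 * x ^ 2 = t ^ 3 := by
  rw [← abs_of_nonneg (by positivity : 0 ≤ 1 / √6 * √t ^ 3), ← sq_eq_sq_iff_abs_eq_abs,
    inv_sqrt_six_mul_sqrt_pow_three_sq ht]
  constructor <;> intro <;> linarith

end Real

namespace Matrix.IsHermitian

variable {𝕜 n : Type*} [RCLike 𝕜] [Fintype n] [DecidableEq n] {A : Matrix n n 𝕜}

theorem trace_pow_eq_sum_eigenvalues_pow (hA : A.IsHermitian) (k : ℕ) :
    (A ^ k).trace = ∑ i, (hA.eigenvalues i : 𝕜) ^ k := by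
  conv_lhs => rw [hA.spectral_theorem, ← map_pow, Unitary.conjStarAlgAut_apply, trace_mul_cycle,
    Unitary.coe_star_mul_self, one_mul, diagonal_pow, trace_diagonal]
  rfl

theorem sum_eigenvalues_eq_zero (hA : A.IsHermitian) (htr : A.trace = 0) :
    ∑ i, hA.eigenvalues i = 0 := by
  exact_mod_cast hA.trace_eq_sum_eigenvalues.symm.trans htr

theorem eq_smul_one_add_smul_vecMulVec (hA : A.IsHermitian) {k : n} {a : ℝ}
    (h : ∀ i ≠ k, hA.eigenvalues i = a) :
    A = (a : 𝕜) • 1 + ((hA.eigenvalues k - a : ℝ) : 𝕜) •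
      vecMulVec ⇑(hA.eigenvectorBasis k) (star ⇑(hA.eigenvectorBasis k)) := by
  have hD : diagonal (RCLike.ofReal ∘ hA.eigenvalues) = (a : 𝕜) • (1 : Matrix n n 𝕜) +
      ((hA.eigenvalues k - a : ℝ) : 𝕜) • vecMulVec (Pi.single k 1) (Pi.single k 1) := by
    ext i j
    rcases eq_or_ne i j with rfl | hij
    · rcases eq_or_ne i k with rfl | hik
      · simp [vecMulVec_apply, RCLike.real_smul_eq_coe_mul]
      · simp [hik, h i hik, vecMulVec_apply, RCLike.real_smul_eq_coe_mul]
    · rcases ne_or_eq i k with hik | rfl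
      · simp [hij, hik, vecMulVec_apply]
      · simp [hij, Ne.symm hij, vecMulVec_apply]
  conv_lhs => rw [hA.spectral_theorem, Unitary.conjStarAlgAut_apply, hD]
  simp only [mul_add, add_mul, Matrix.mul_smul, Matrix.smul_mul, mul_one, mul_vecMulVec,
    vecMulVec_mul, eigenvectorUnitary_mulVec, single_one_vecMul,
    Unitary.mul_star_self_of_mem hA.eigenvectorUnitary.2]
  rfl

theorem eq_smul_vecMulVec_sub_of_trace_eq_zero (hA : A.IsHermitian) (htr : A.trace = 0) {k : n}
    {a : ℝ} (h : ∀ i ≠ k, hA.eigenvalues i = a) :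
    A = ((hA.eigenvalues k - a : ℝ) : 𝕜) •
      (vecMulVec ⇑(hA.eigenvectorBasis k) (star ⇑(hA.eigenvectorBasis k)) -
        (Fintype.card n : 𝕜)⁻¹ • 1) := by
  have : Nonempty n := ⟨k⟩
  have hsum : hA.eigenvalues k + (Fintype.card n - 1) * a = 0 := by
    rw [← hA.sum_eigenvalues_eq_zero htr, Fintype.sum_eq_add_sum_compl k,
      Finset.sum_congr rfl fun i hi => h i (by simpa using hi)]
    simp [Finset.card_compl, Nat.cast_sub Fintype.card_pos]
  have hcard : (Fintype.card n : 𝕜) ≠ 0 := Nat.cast_ne_zero.mpr Fintype.card_ne_zero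
  have ha : (a : 𝕜) = -((hA.eigenvalues k - a : ℝ) : 𝕜) * (Fintype.card n : 𝕜)⁻¹ := by
    field_simp
    exact_mod_cast (by linear_combination hsum : a * Fintype.card n = -(hA.eigenvalues k - a))
  conv_lhs => rw [hA.eq_smul_one_add_smul_vecMulVec h]
  rw [smul_sub, smul_smul, ha]
  module

theorem sum_eigenvectorBasis_sq {A : Matrix n n ℝ} (hA : A.IsHermitian) (k : n) :
    ∑ i, hA.eigenvectorBasis k i ^ 2 = 1 := by
  rw [← EuclideanSpace.real_norm_sq_eq, hA.eigenvectorBasis.orthonormal.1 k, one_pow]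

end Matrix.IsHermitian

noncomputable def uniaxial (s : ℝ) (n : Fin 3 → ℝ) : Matrix (Fin 3) (Fin 3) ℝ :=
  s • (vecMulVec n n - (1 / 3 : ℝ) • 1)

theorem vecMulVec_self_mul_self {R m : Type*} [CommSemiring R] [Fintype m] {n : m → R}
    (hn : n ⬝ᵥ n = 1) : vecMulVec n n * vecMulVec n n = vecMulVec n n := by
  rw [vecMulVec_mul_vecMulVec, hn, one_smul]

section Uniaxial

variable {s : ℝ} {n : Fin 3 → ℝ}

theorem trace_uniaxial_mul_self (hn : n ⬝ᵥ n = 1) :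
    (uniaxial s n * uniaxial s n).trace = 2 / 3 * s ^ 2 := by
  simp only [uniaxial, sub_mul, mul_sub, Matrix.smul_mul, Matrix.mul_smul, one_mul, mul_one,
    vecMulVec_self_mul_self hn, trace_smul, trace_sub, trace_one, trace_vecMulVec, hn,
    Fintype.card_fin]
  ring

theorem trace_uniaxial_mul_self_mul_self (hn : n ⬝ᵥ n = 1) :
    (uniaxial s n * uniaxial s n * uniaxial s n).trace = 2 / 9 * s ^ 3 := by
  simp only [uniaxial, sub_mul, mul_sub, Matrix.smul_mul, Matrix.mul_smul, one_mul, mul_one,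
    vecMulVec_self_mul_self hn, trace_smul, trace_sub, trace_one, trace_vecMulVec, hn,
    Fintype.card_fin]
  ring

theorem Matrix.IsHermitian.eq_uniaxial_of_trace_eq_zero {Q : Matrix (Fin 3) (Fin 3) ℝ}
    (hQ : Q.IsHermitian) (htr : Q.trace = 0) {k : Fin 3} {a : ℝ}
    (h : ∀ i ≠ k, hQ.eigenvalues i = a) :
    Q = uniaxial (hQ.eigenvalues k - a) ⇑(hQ.eigenvectorBasis k) := by
  simpa [uniaxial, one_div] using hQ.eq_smul_vecMulVec_sub_of_trace_eq_zero htr h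

end Uniaxial

theorem Fin.exists_forall_ne_eq_of_eq_or_eq_or_eq {α : Type*} {f : Fin 3 → α}
    (h : f 0 = f 1 ∨ f 1 = f 2 ∨ f 2 = f 0) : ∃ k a, ∀ i ≠ k, f i = a := by
  rcases h with h | h | h
  exacts [⟨2, f 0, fun i hi => by fin_cases i <;> simp_all⟩,
    ⟨0, f 1, fun i hi => by fin_cases i <;> simp_all⟩,
    ⟨1, f 2, fun i hi => by fin_cases i <;> simp_all⟩]

/-- For any traceless symmetric `3×3` real matrix `Q`,
`|tr(Q³)| ≤ (1/√6) |Q|³` where `|Q| = √(tr(Q²))` is the Frobenius norm, with equality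
if and only if `Q` is uniaxial, i.e. `Q = s (n ⊗ n − I/3)` for some `s ∈ ℝ` and unit
vector `n ∈ ℝ³`. -/
theorem trace_cube_bound (Q : Matrix (Fin 3) (Fin 3) ℝ)
    (hsymm : Q.IsSymm) (htrace : Q.trace = 0) :
    |Matrix.trace (Q * Q * Q)| ≤ (1 / Real.sqrt 6) * Real.sqrt (Matrix.trace (Q * Q)) ^ 3 ∧
    (|Matrix.trace (Q * Q * Q)| = (1 / Real.sqrt 6) * Real.sqrt (Matrix.trace (Q * Q)) ^ 3 ↔
      ∃ (s : ℝ) (n : Fin 3 → ℝ), (∑ i : Fin 3, (n i) ^ 2 = 1) ∧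
        Q = s • (Matrix.vecMulVec n n - (1 / 3 : ℝ) • (1 : Matrix (Fin 3) (Fin 3) ℝ))) := by
  have hQ : Q.IsHermitian := isHermitian_iff_isSymm.mpr hsymm
  set μ := hQ.eigenvalues
  have hμ : μ 0 + μ 1 + μ 2 = 0 := by
    simpa [Fin.sum_univ_three] using hQ.sum_eigenvalues_eq_zero htrace
  have h2 : (Q * Q).trace = μ 0 ^ 2 + μ 1 ^ 2 + μ 2 ^ 2 := by
    rw [← sq, hQ.trace_pow_eq_sum_eigenvalues_pow, Fin.sum_univ_three]; rfl
  have h3 : (Q * Q * Q).trace = μ 0 ^ 3 + μ 1 ^ 3 + μ 2 ^ 3 := by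
    rw [← pow_three', hQ.trace_pow_eq_sum_eigenvalues_pow, Fin.sum_univ_three]; rfl
  have ht : 0 ≤ (Q * Q).trace := h2 ▸ by positivity
  change _ ∧ (_ ↔ ∃ s n, _ ∧ Q = uniaxial s n)
  rw [abs_le_inv_sqrt_six_mul_sqrt_pow_three_iff ht, abs_eq_inv_sqrt_six_mul_sqrt_pow_three_iff ht]
  refine ⟨h2 ▸ h3 ▸ six_mul_sum_cube_sq_le hμ, fun heq => ?_, ?_⟩
  · rw [h2, h3, six_mul_sum_cube_sq_eq_iff hμ] at heq
    obtain ⟨k, a, h⟩ := Fin.exists_forall_ne_eq_of_eq_or_eq_or_eq heq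
    exact ⟨_, _, hQ.sum_eigenvectorBasis_sq k, hQ.eq_uniaxial_of_trace_eq_zero htrace h⟩
  · rintro ⟨s, n, hn, rfl⟩
    have hn' : n ⬝ᵥ n = 1 := by simpa [dotProduct, sq] using hn
    rw [trace_uniaxial_mul_self hn', trace_uniaxial_mul_self_mul_self hn']
    ring
end
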